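/- arXiv:2004.11380 — 10 statements merged into one kernel-verified Lean document; each statement's English description precedes it below -/
import Mathlib

section
/- Let X be a finite set of unit vectors in R^d with a probability distribution μ, and suppose (X,μ) is in (1/4)-isotropic position, i.e., for every nonzero v in R^d, (3/4)(1/d) ≤ Σ_{x∈X} μ(x)⟨x,v⟩²/‖v‖² ≤ (5/4)(1/d). Then for any hyperplane normal vector h ≠ 0, at least a 3/(8d) fraction of (X,μ) (measured by μ) has normalized margin |⟨x,h⟩|/‖h‖ at least √(3/(8d)). -/
open scoped RealInnerProductSpace BigOperators

/-!
The lower isotropy bound says that the normalized squared margin `⟪x, h⟫² / ‖h‖²`, a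
quantity in `[0, 1]` for unit vectors `x`, has `μ`-mean at least `3 / (4d)`. By a reverse
Markov inequality, a `[0, 1]`-valued quantity with mean `a` exceeds `t` on a set of mass at
least `a - t`; with `t = 3 / (8d)` this is the claim, since `√t ≤ |m|` iff `t ≤ m²`.
-/

/-- Reverse Markov inequality for finite weighted sums of a function bounded by `1`. -/
theorem Finset.sum_mul_le_sum_filter_le_add {ι : Type*} (s : Finset ι) (w f : ι → ℝ)
    (hw : ∀ i ∈ s, 0 ≤ w i) (hf : ∀ i ∈ s, f i ≤ 1) {t : ℝ} (ht : 0 ≤ t) :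
    ∑ i ∈ s, w i * f i ≤ ∑ i ∈ s.filter (fun i => t ≤ f i), w i + t * ∑ i ∈ s, w i := by
  classical
  rw [← Finset.sum_filter_add_sum_filter_not s (fun i => t ≤ f i)]
  have hlarge : ∑ i ∈ s.filter (fun i => t ≤ f i), w i * f i
      ≤ ∑ i ∈ s.filter (fun i => t ≤ f i), w i :=
    Finset.sum_le_sum fun i hi => by
      have hi := (Finset.mem_filter.mp hi).1
      simpa using mul_le_mul_of_nonneg_left (hf i hi) (hw i hi)
  have hsmall : ∑ i ∈ s.filter (fun i => ¬ t ≤ f i), w i * f i ≤ t * ∑ i ∈ s, w i :=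
    calc ∑ i ∈ s.filter (fun i => ¬ t ≤ f i), w i * f i
        ≤ ∑ i ∈ s.filter (fun i => ¬ t ≤ f i), t * w i :=
          Finset.sum_le_sum fun i hi => by
            obtain ⟨hi, hlt⟩ := Finset.mem_filter.mp hi
            rw [mul_comm t]
            exact mul_le_mul_of_nonneg_left (le_of_not_ge hlt) (hw i hi)
      _ ≤ ∑ i ∈ s, t * w i :=
          Finset.sum_le_sum_of_subset_of_nonneg (Finset.filter_subset _ _)
            fun i hi _ => mul_nonneg ht (hw i hi)
      _ = t * ∑ i ∈ s, w i := (Finset.mul_sum _ _ _).symm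
  linarith

theorem real_inner_sq_div_norm_sq_le_one {E : Type*} [NormedAddCommGroup E]
    [InnerProductSpace ℝ E] {x : E} (hx : ‖x‖ = 1) (h : E) :
    ⟪x, h⟫ ^ 2 / ‖h‖ ^ 2 ≤ 1 := by
  apply div_le_one_of_le₀ _ (sq_nonneg _)
  have := abs_real_inner_le_norm x h
  rw [hx, one_mul] at this
  exact sq_le_sq' (abs_le.mp this).1 (abs_le.mp this).2

theorem Real.sqrt_le_abs_div_iff {t : ℝ} (a : ℝ) {b : ℝ} (hb : 0 < b) :
    √t ≤ |a| / b ↔ t ≤ a ^ 2 / b ^ 2 := by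
  rw [← abs_of_pos hb, ← abs_div, ← Real.sqrt_sq_eq_abs, div_pow,
    Real.sqrt_le_sqrt_iff (by positivity), sq_abs]

theorem stmt_0_general (d : ℕ) (X : Finset (EuclideanSpace ℝ (Fin d)))
    (μ : EuclideanSpace ℝ (Fin d) → ℝ)
    (hμ0 : ∀ x ∈ X, 0 ≤ μ x) (hμ1 : ∑ x ∈ X, μ x = 1)
    (hunit : ∀ x ∈ X, ‖x‖ = 1)
    (hiso : ∀ v : EuclideanSpace ℝ (Fin d), v ≠ 0 →
      (3 / 4) * (1 / d) ≤ ∑ x ∈ X, μ x * ⟪x, v⟫ ^ 2 / ‖v‖ ^ 2 ∧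
      ∑ x ∈ X, μ x * ⟪x, v⟫ ^ 2 / ‖v‖ ^ 2 ≤ (5 / 4) * (1 / d))
    (h : EuclideanSpace ℝ (Fin d)) (hh : h ≠ 0) :
    3 / (8 * d) ≤
      ∑ x ∈ X.filter (fun x => Real.sqrt (3 / (8 * d)) ≤ |⟪x, h⟫| / ‖h‖), μ x := by
  have hfilter : X.filter (fun x => Real.sqrt (3 / (8 * d)) ≤ |⟪x, h⟫| / ‖h‖)
      = X.filter (fun x => 3 / (8 * d) ≤ ⟪x, h⟫ ^ 2 / ‖h‖ ^ 2) :=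
    Finset.filter_congr fun x _ => Real.sqrt_le_abs_div_iff _ (norm_pos_iff.mpr hh)
  have hmarkov := Finset.sum_mul_le_sum_filter_le_add X μ (fun x => ⟪x, h⟫ ^ 2 / ‖h‖ ^ 2)
    hμ0 (fun x hx => real_inner_sq_div_norm_sq_le_one (hunit x hx) h)
    (t := 3 / (8 * d)) (by positivity)
  simp only [hμ1, mul_one, ← mul_div_assoc] at hmarkov
  rw [hfilter]
  linarith [(hiso h hh).1, show (3 : ℝ) / 4 * (1 / d) = 2 * (3 / (8 * d)) by ring]

/-- If a finite set of unit vectors `X` with distribution `μ` is in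
`1/4`-isotropic position, then for any nonzero `h`, at least a `3/(8d)` fraction of
`(X,μ)` has normalized margin at least `√(3/(8d))`. -/
theorem stmt_0 (d : ℕ) (hd : 0 < d) (X : Finset (EuclideanSpace ℝ (Fin d)))
    (μ : EuclideanSpace ℝ (Fin d) → ℝ)
    (hμ0 : ∀ x ∈ X, 0 ≤ μ x) (hμ1 : ∑ x ∈ X, μ x = 1)
    (hunit : ∀ x ∈ X, ‖x‖ = 1)
    (hiso : ∀ v : EuclideanSpace ℝ (Fin d), v ≠ 0 →
      (3 / 4) * (1 / d) ≤ ∑ x ∈ X, μ x * ⟪x, v⟫ ^ 2 / ‖v‖ ^ 2 ∧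
      ∑ x ∈ X, μ x * ⟪x, v⟫ ^ 2 / ‖v‖ ^ 2 ≤ (5 / 4) * (1 / d))
    (h : EuclideanSpace ℝ (Fin d)) (hh : h ≠ 0) :
    3 / (8 * d) ≤
      ∑ x ∈ X.filter (fun x => Real.sqrt (3 / (8 * d)) ≤ |⟪x, h⟫| / ‖h‖), μ x :=
  stmt_0_general d X μ hμ0 hμ1 hunit hiso h hh
end

section
/- Let z ≥ 1 be an integer, μ a probability distribution on a finite set X of unit vectors in R^d, h a nonzero hyperplane normal, and let X_z be the random variable equal to the margin norm ‖S‖_h of a sample S of z points drawn i.i.d. from μ. Suppose M > 0 satisfies Pr[X_z ≥ M] ≥ u and Pr[X_z ≤ M] ≥ u for some u ∈ (0,1]. Then Pr_{x∼μ}[|m(x,h)| ≥ M/√z] ≥ u/z and Pr_{x∼μ}[|m(x,h)| ≤ M] ≥ 1 − ln(1/u)/z. -/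
/-!
Bounding the sample norm by its largest coordinate, `‖S‖_h ≥ M` forces some sample point to have
margin at least `M/√z`, and a union bound over the `z` coordinates turns probability `u` into
probability `u/z` for a single point. Conversely `‖S‖_h ≤ M` forces every sample point to have
margin at most `M`; by independence that event has probability `q^z`, where `q` is the probability
of a single point doing so, and `u ≤ q^z` gives `log u ≤ z log q ≤ z (q - 1)`.
-/

open scoped RealInnerProductSpace BigOperators Classical

open Finset

theorem Finset.sum_filter_univ_coe {α β : Type*} [AddCommMonoid β] (s : Finset α) (P : α → Prop)
    [DecidablePred P] (f : α → β) :
    ∑ x ∈ univ.filter (fun x : s => P x), f x = ∑ x ∈ s.filter P, f x := by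
  rw [sum_filter, sum_filter, sum_coe_sort s (fun x => if P x then f x else 0)]

theorem exists_div_sqrt_card_le_abs_of_le_sqrt_sum_sq {ι : Type*} [Fintype ι] [Nonempty ι]
    {f : ι → ℝ} {M : ℝ} (hM : M ≤ √(∑ i, f i ^ 2)) : ∃ i, M / √(Fintype.card ι) ≤ |f i| := by
  obtain ⟨i, -, hi⟩ := exists_max_image univ (fun i => |f i|) univ_nonempty
  refine ⟨i, ?_⟩
  have hsum : ∑ j, f j ^ 2 ≤ Fintype.card ι * f i ^ 2 := by
    calc ∑ j, f j ^ 2 ≤ ∑ _j : ι, f i ^ 2 := sum_le_sum fun j hj => sq_le_sq.mpr (hi j hj)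
      _ = Fintype.card ι * f i ^ 2 := by rw [sum_const, card_univ, nsmul_eq_mul]
  rw [div_le_iff₀ (by positivity)]
  calc M ≤ √(∑ j, f j ^ 2) := hM
    _ ≤ √(Fintype.card ι * f i ^ 2) := Real.sqrt_le_sqrt hsum
    _ = |f i| * √(Fintype.card ι) := by
      rw [Real.sqrt_mul (by positivity), Real.sqrt_sq_eq_abs, mul_comm]

theorem abs_le_of_sqrt_sum_sq_le {ι : Type*} [Fintype ι] {f : ι → ℝ} {M : ℝ}
    (hM : √(∑ i, f i ^ 2) ≤ M) (j : ι) : |f j| ≤ M :=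
  calc |f j| = √(f j ^ 2) := (Real.sqrt_sq_eq_abs _).symm
    _ ≤ √(∑ i, f i ^ 2) :=
      Real.sqrt_le_sqrt (single_le_sum (fun i _ => sq_nonneg (f i)) (mem_univ j))
    _ ≤ M := hM

theorem one_sub_log_inv_div_le_of_le_pow {n : ℕ} {u q : ℝ} (hn : 0 < n) (hu : 0 < u)
    (hq : 0 ≤ q) (huq : u ≤ q ^ n) : 1 - Real.log (1 / u) / n ≤ q := by
  have hq_pos : 0 < q := hq.lt_of_ne' fun hq0 => by
    rw [hq0, zero_pow hn.ne'] at huq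
    linarith
  have hlog : Real.log u ≤ n * (q - 1) :=
    calc Real.log u ≤ Real.log (q ^ n) := Real.log_le_log hu huq
      _ = n * Real.log q := Real.log_pow q n
      _ ≤ n * (q - 1) := by gcongr; exact Real.log_le_sub_one_of_pos hq_pos
  have hdiv : Real.log u / n ≤ q - 1 := (div_le_iff₀' (by exact_mod_cast hn)).mpr hlog
  rw [one_div, Real.log_inv, neg_div]
  linarith

section IidSample

variable {α R : Type*} [Fintype α] {n : ℕ}

theorem sum_filter_forall_apply_prod_eq_pow [CommSemiring R] (w : α → R) (P : α → Prop)
    [DecidablePred P] :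
    ∑ s ∈ univ.filter (fun s : Fin n → α => ∀ j, P (s j)), ∏ j, w (s j)
      = (∑ x ∈ univ.filter P, w x) ^ n := by
  have hfilter : univ.filter (fun s : Fin n → α => ∀ j, P (s j))
      = Fintype.piFinset fun _ => univ.filter P := by
    ext s
    simp [Fintype.mem_piFinset]
  rw [hfilter, sum_prod_piFinset, prod_const, card_univ, Fintype.card_fin]

theorem sum_filter_apply_prod_eq [CommSemiring R] {w : α → R} (hw : ∑ x, w x = 1)
    (P : α → Prop) [DecidablePred P] (i : Fin n) :
    ∑ s ∈ univ.filter (fun s : Fin n → α => P (s i)), ∏ j, w (s j)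
      = ∑ x ∈ univ.filter P, w x := by
  have hfilter : univ.filter (fun s : Fin n → α => P (s i))
      = Fintype.piFinset fun j => if j = i then univ.filter P else univ := by
    ext s
    simp only [mem_filter, mem_univ, true_and, Fintype.mem_piFinset]
    refine ⟨fun hP j => ?_, fun hall => by simpa using hall i⟩
    split_ifs with hj
    · subst hj
      simpa using hP
    · exact mem_univ _
  rw [hfilter, ← prod_univ_sum (f := fun _ => w),
    prod_eq_single i (fun j _ hj => by rw [if_neg hj, hw]) (by simp), if_pos rfl]

theorem sum_filter_exists_apply_prod_le [CommSemiring R] [PartialOrder R] [IsOrderedRing R]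
    {w : α → R} (hw0 : ∀ x, 0 ≤ w x) (hw1 : ∑ x, w x = 1)
    (P : α → Prop) [DecidablePred P] :
    ∑ s ∈ univ.filter (fun s : Fin n → α => ∃ i, P (s i)), ∏ j, w (s j)
      ≤ n * ∑ x ∈ univ.filter P, w x := by
  have hW : ∀ s : Fin n → α, 0 ≤ ∏ j, w (s j) := fun s => prod_nonneg fun j _ => hw0 _
  have hterm : ∀ s : Fin n → α, ∀ i, 0 ≤ if P (s i) then ∏ j, w (s j) else 0 := fun s i => by
    split_ifs
    exacts [hW s, le_rfl]
  calc ∑ s ∈ univ.filter (fun s : Fin n → α => ∃ i, P (s i)), ∏ j, w (s j)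
      ≤ ∑ s : Fin n → α, ∑ i, if P (s i) then ∏ j, w (s j) else 0 := by
        rw [sum_filter]
        refine sum_le_sum fun s _ => ?_
        split_ifs with hs
        · obtain ⟨i, hi⟩ := hs
          calc ∏ j, w (s j) = if P (s i) then ∏ j, w (s j) else 0 := (if_pos hi).symm
            _ ≤ _ := single_le_sum (fun i _ => hterm s i) (mem_univ i)
        · exact sum_nonneg fun i _ => hterm s i
    _ = ∑ _i : Fin n, ∑ x ∈ univ.filter P, w x := by
        rw [sum_comm]
        refine sum_congr rfl fun i _ => ?_
        rw [← sum_filter, sum_filter_apply_prod_eq hw1]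
    _ = n * ∑ x ∈ univ.filter P, w x := by
        rw [sum_const, card_univ, Fintype.card_fin, nsmul_eq_mul]

theorem div_le_sum_filter_div_sqrt_le_abs {w : α → ℝ} (hw0 : ∀ x, 0 ≤ w x) (hw1 : ∑ x, w x = 1)
    (hn : 0 < n) (g : α → ℝ) {M u : ℝ}
    (hge : u ≤ ∑ s ∈ univ.filter (fun s : Fin n → α => M ≤ √(∑ i, g (s i) ^ 2)),
      ∏ i, w (s i)) :
    u / n ≤ ∑ x ∈ univ.filter (fun x => M / √n ≤ |g x|), w x := by
  have : Nonempty (Fin n) := ⟨⟨0, hn⟩⟩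
  rw [div_le_iff₀' (by exact_mod_cast hn)]
  calc u ≤ _ := hge
    _ ≤ ∑ s ∈ univ.filter (fun s : Fin n → α => ∃ i, M / √n ≤ |g (s i)|), ∏ i, w (s i) := by
        refine sum_le_sum_of_subset_of_nonneg (monotone_filter_right _ fun s _ hs => ?_)
          fun s _ _ => prod_nonneg fun j _ => hw0 _
        simpa using exists_div_sqrt_card_le_abs_of_le_sqrt_sum_sq hs
    _ ≤ _ := sum_filter_exists_apply_prod_le hw0 hw1 (fun x => M / √n ≤ |g x|)

theorem one_sub_log_inv_div_le_sum_filter_abs_le {w : α → ℝ} (hw0 : ∀ x, 0 ≤ w x) (hn : 0 < n)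
    (g : α → ℝ) {M u : ℝ} (hu : 0 < u)
    (hle : u ≤ ∑ s ∈ univ.filter (fun s : Fin n → α => √(∑ i, g (s i) ^ 2) ≤ M),
      ∏ i, w (s i)) :
    1 - Real.log (1 / u) / n ≤ ∑ x ∈ univ.filter (fun x => |g x| ≤ M), w x := by
  refine one_sub_log_inv_div_le_of_le_pow hn hu (sum_nonneg fun x _ => hw0 x) ?_
  calc u ≤ _ := hle
    _ ≤ ∑ s ∈ univ.filter (fun s : Fin n → α => ∀ j, |g (s j)| ≤ M), ∏ i, w (s i) :=
        sum_le_sum_of_subset_of_nonneg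
          (monotone_filter_right _ fun s _ hs => abs_le_of_sqrt_sum_sq_le hs)
          fun s _ _ => prod_nonneg fun j _ => hw0 _
    _ = _ := sum_filter_forall_apply_prod_eq_pow w (fun x => |g x| ≤ M)

end IidSample

theorem stmt_4_general (d z : ℕ) (hz : 1 ≤ z) (X : Finset (EuclideanSpace ℝ (Fin d)))
    (μ : EuclideanSpace ℝ (Fin d) → ℝ)
    (hμ0 : ∀ x ∈ X, 0 ≤ μ x) (hμ1 : ∑ x ∈ X, μ x = 1)
    (h : EuclideanSpace ℝ (Fin d))
    (M u : ℝ) (hu : 0 < u)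
    (hge : u ≤ ∑ s ∈ Finset.univ.filter
      (fun s : Fin z → {x // x ∈ X} =>
        M ≤ Real.sqrt (∑ i, (⟪(s i : EuclideanSpace ℝ (Fin d)), h⟫ / ‖h‖) ^ 2)),
      ∏ i, μ (s i))
    (hle : u ≤ ∑ s ∈ Finset.univ.filter
      (fun s : Fin z → {x // x ∈ X} =>
        Real.sqrt (∑ i, (⟪(s i : EuclideanSpace ℝ (Fin d)), h⟫ / ‖h‖) ^ 2) ≤ M),
      ∏ i, μ (s i)) :
    u / z ≤ ∑ x ∈ X.filter (fun x => M / Real.sqrt z ≤ |⟪x, h⟫| / ‖h‖), μ x ∧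
    1 - Real.log (1 / u) / z ≤ ∑ x ∈ X.filter (fun x => |⟪x, h⟫| / ‖h‖ ≤ M), μ x := by
  have hw0 : ∀ x : X, 0 ≤ μ x := fun x => hμ0 x x.2
  have hw1 : ∑ x : X, μ x = 1 := by rwa [sum_coe_sort]
  have habs : ∀ x, |⟪x, h⟫| / ‖h‖ = |⟪x, h⟫ / ‖h‖| := fun x => by rw [abs_div, abs_norm]
  simp only [habs, ← sum_filter_univ_coe X]
  exact ⟨div_le_sum_filter_div_sqrt_le_abs hw0 hw1 hz _ hge,
    one_sub_log_inv_div_le_sum_filter_abs_le hw0 hz _ hu hle⟩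

/-- u-median property of the margin norm of an i.i.d. sample of size `z`.
The probability of a tuple `s : Fin z → X` is `∏ i, μ (s i)`, and its margin norm is
`√(∑ i, m(s i, h)²)`. If `M` is a `u`-median of this quantity, then at least a `u/z`
fraction of `(X,μ)` has normalized margin ≥ `M/√z`, and at least a `1 − ln(1/u)/z`
fraction has normalized margin ≤ `M`. -/
theorem stmt_4 (d z : ℕ) (hz : 1 ≤ z) (X : Finset (EuclideanSpace ℝ (Fin d)))
    (μ : EuclideanSpace ℝ (Fin d) → ℝ)
    (hμ0 : ∀ x ∈ X, 0 ≤ μ x) (hμ1 : ∑ x ∈ X, μ x = 1)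
    (hunit : ∀ x ∈ X, ‖x‖ = 1)
    (h : EuclideanSpace ℝ (Fin d)) (hh : h ≠ 0)
    (M u : ℝ) (hM : 0 < M) (hu : 0 < u) (hu1 : u ≤ 1)
    (hge : u ≤ ∑ s ∈ Finset.univ.filter
      (fun s : Fin z → {x // x ∈ X} =>
        M ≤ Real.sqrt (∑ i, (⟪(s i : EuclideanSpace ℝ (Fin d)), h⟫ / ‖h‖) ^ 2)),
      ∏ i, μ (s i))
    (hle : u ≤ ∑ s ∈ Finset.univ.filter
      (fun s : Fin z → {x // x ∈ X} =>
        Real.sqrt (∑ i, (⟪(s i : EuclideanSpace ℝ (Fin d)), h⟫ / ‖h‖) ^ 2) ≤ M),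
      ∏ i, μ (s i)) :
    u / z ≤ ∑ x ∈ X.filter (fun x => M / Real.sqrt z ≤ |⟪x, h⟫| / ‖h‖), μ x ∧
    1 - Real.log (1 / u) / z ≤ ∑ x ∈ X.filter (fun x => |⟪x, h⟫| / ‖h‖ ≤ M), μ x :=
  stmt_4_general d z hz X μ hμ0 hμ1 h M u hu hge hle
end

section
/- Let (X,μ) be a finite set of unit vectors in R^d with distribution μ, in (1/4)-isotropic position, and (k,t,s,5)-structured with respect to a nonzero h ∈ R^d, where k < d/10. Let S = {x ∈ X : |m(x,h)| ≤ t/s} and let V be the span of the eigenvectors of Cov(S) = E_{x∼μ|_S}[x xᵀ] with eigenvalue at least 1/(4d). Then dim(V) ≥ d − C·k for a universal constant C, and every v ∈ V satisfies |m(v,h)| ≤ C'·‖v‖·d·(t/s) for a universal constant C'. -/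
open scoped RealInnerProductSpace BigOperators Classical

set_option maxHeartbeats 1000000 in
/-- For a `1/4`-isotropic, `(k,t,s,5)`-structured pair with `k < d/10`, the
span `V` of eigenvectors of the covariance operator of the small-margin points `S` with
eigenvalue at least `1/(4d)` has dimension at least `d − C·k`, and every `v ∈ V` has
normalized margin at most `C'·‖v‖·d·(t/s)`. -/
theorem stmt_7 : ∃ C C' : ℝ, 0 < C ∧ 0 < C' ∧
    ∀ (d k : ℕ) (t s : ℝ), 0 < d → 0 < k → (k : ℝ) < d / 10 → 0 < t → 2 < s →
    ∀ (X : Finset (EuclideanSpace ℝ (Fin d))) (μ : EuclideanSpace ℝ (Fin d) → ℝ),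
      (∀ x ∈ X, 0 ≤ μ x) → (∑ x ∈ X, μ x = 1) → (∀ x ∈ X, ‖x‖ = 1) →
      -- 1/4-isotropic position
      (∀ v : EuclideanSpace ℝ (Fin d), v ≠ 0 →
        (3 / 4) * (1 / d) ≤ ∑ x ∈ X, μ x * ⟪x, v⟫ ^ 2 / ‖v‖ ^ 2 ∧
        ∑ x ∈ X, μ x * ⟪x, v⟫ ^ 2 / ‖v‖ ^ 2 ≤ (5 / 4) * (1 / d)) →
    ∀ (h : EuclideanSpace ℝ (Fin d)), h ≠ 0 →
      -- (k,t,s,5)-structured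
      ((k : ℝ) / d ≤ ∑ x ∈ X.filter (fun x => t ≤ |⟪x, h⟫| / ‖h‖), μ x) →
      (1 - 5 * k / d ≤ ∑ x ∈ X.filter (fun x => |⟪x, h⟫| / ‖h‖ ≤ t / s), μ x) →
    ∀ (A : Module.End ℝ (EuclideanSpace ℝ (Fin d))),
      -- A is the covariance operator of S = {x ∈ X : |m(x,h)| ≤ t/s} under μ|_S
      (∀ v, A v = ∑ x ∈ X.filter (fun x => |⟪x, h⟫| / ‖h‖ ≤ t / s),
        (μ x / ∑ y ∈ X.filter (fun y => |⟪y, h⟫| / ‖h‖ ≤ t / s), μ y) • ⟪x, v⟫ • x) →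
    ∀ (V : Submodule ℝ (EuclideanSpace ℝ (Fin d))),
      V = (⨆ (lam : ℝ) (_ : 1 / (4 * d) ≤ lam), Module.End.eigenspace A lam) →
      ((d : ℝ) - C * k ≤ Module.finrank ℝ V ∧
       ∀ v ∈ V, |⟪v, h⟫| / ‖h‖ ≤ C' * ‖v‖ * d * (t / s)) := by
  classical
  refine ⟨10, 4, by norm_num, by norm_num, ?_⟩
  intro d k t s hd hk hkd ht hs X μ hμ0 hμ1 hXnorm hiso h hh hstr1 hstr2 A hA V hV
  set S : Finset (EuclideanSpace ℝ (Fin d)) :=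
    X.filter (fun x => |⟪x, h⟫| / ‖h‖ ≤ t / s) with hSdef
  set p : ℝ := ∑ y ∈ S, μ y with hpdef
  have hd0 : (0:ℝ) < d := by exact_mod_cast hd
  have hk0 : (0:ℝ) < k := by exact_mod_cast hk
  have hkd' : 5 * (k:ℝ) / d < 1 / 2 := by
    rw [div_lt_iff₀ hd0]; rw [lt_div_iff₀ (by norm_num : (0:ℝ) < 10)] at hkd; linarith
  have hμS : ∀ x ∈ S, 0 ≤ μ x := fun x hx => hμ0 x (Finset.filter_subset _ _ hx)
  have hp_lb : 1 - 5 * (k:ℝ) / d ≤ p := hstr2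
  have hp0 : 0 < p := by linarith
  have hp1 : p ≤ 1 := by
    rw [← hμ1]
    exact Finset.sum_le_sum_of_subset_of_nonneg (Finset.filter_subset _ _)
      (fun x hx _ => hμ0 x hx)
  -- symmetry of A
  have hAsym : (A : EuclideanSpace ℝ (Fin d) →ₗ[ℝ] EuclideanSpace ℝ (Fin d)).IsSymmetric := by
    intro v w
    rw [hA v, hA w, sum_inner, inner_sum]
    refine Finset.sum_congr rfl fun x _ => ?_
    simp only [real_inner_smul_left, real_inner_smul_right]
    rw [real_inner_comm v x]
    ring
  -- quadratic form
  have hquad : ∀ v : EuclideanSpace ℝ (Fin d),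
      ⟪v, A v⟫ = ∑ x ∈ S, (μ x / p) * ⟪x, v⟫ ^ 2 := by
    intro v
    rw [hA v, inner_sum]
    refine Finset.sum_congr rfl fun x _ => ?_
    simp only [real_inner_smul_right]
    rw [real_inner_comm v x]
    ring
  have hn : Module.finrank ℝ (EuclideanSpace ℝ (Fin d)) = d := finrank_euclideanSpace_fin
  set b := hAsym.eigenvectorBasis hn with hbdef
  set ev := hAsym.eigenvalues hn with hevdef
  have hApply : ∀ i, A (b i) = ev i • b i := fun i =>
    hAsym.apply_eigenvectorBasis hn i
  have hbnorm : ∀ i, ‖b i‖ = 1 := fun i => b.orthonormal.1 i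
  have hbne : ∀ i, b i ≠ 0 := fun i => by
    intro h0; have := hbnorm i; rw [h0] at this; simp at this
  have hev_eq : ∀ i, ev i = ∑ x ∈ S, (μ x / p) * ⟪x, b i⟫ ^ 2 := by
    intro i
    have h1 : ⟪b i, A (b i)⟫ = ev i := by
      rw [hApply i, real_inner_smul_right, real_inner_self_eq_norm_sq, hbnorm i]; ring
    rw [← h1, hquad]
  have hev_nonneg : ∀ i, 0 ≤ ev i := by
    intro i
    rw [hev_eq i]
    exact Finset.sum_nonneg fun x hx =>
      mul_nonneg (div_nonneg (hμS x hx) hp0.le) (sq_nonneg _)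
  -- Parseval
  have hpar : ∀ x : EuclideanSpace ℝ (Fin d), ∑ i, ⟪b i, x⟫ ^ 2 = ‖x‖ ^ 2 := by
    intro x
    have := b.sum_inner_mul_inner x x
    rw [real_inner_self_eq_norm_sq] at this
    rw [← this]
    exact Finset.sum_congr rfl fun i _ => by rw [real_inner_comm x (b i)]; ring
  -- index sets
  set I : Finset (Fin d) := Finset.univ.filter (fun i => 1 / (4 * (d:ℝ)) ≤ ev i) with hIdef
  set Ic : Finset (Fin d) := Finset.univ.filter (fun i => ¬ (1 / (4 * (d:ℝ)) ≤ ev i)) with hIcdef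
  set Xc : Finset (EuclideanSpace ℝ (Fin d)) :=
    X.filter (fun x => ¬ (|⟪x, h⟫| / ‖h‖ ≤ t / s)) with hXcdef
  have hSpart : ∀ i, ∑ x ∈ S, μ x * ⟪x, b i⟫ ^ 2 = p * ev i := by
    intro i
    rw [hev_eq i, Finset.mul_sum]
    exact Finset.sum_congr rfl fun x hx => by field_simp
  have h1p : ∑ x ∈ Xc, μ x = 1 - p := by
    have := Finset.sum_filter_add_sum_filter_not X
      (fun x => |⟪x, h⟫| / ‖h‖ ≤ t / s) μ
    rw [hμ1] at this
    rw [hXcdef, hSdef] at *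
    linarith
  have hrest : ∀ i : Fin d, i ∈ Ic →
      1 / (2 * (d:ℝ)) ≤ ∑ x ∈ Xc, μ x * ⟪x, b i⟫ ^ 2 := by
    intro i hi
    have hIlt : ev i < 1 / (4 * (d:ℝ)) :=
      not_le.mp (Finset.mem_filter.mp hi).2
    have hiso'' : 3 / 4 * (1 / (d:ℝ)) ≤ ∑ x ∈ X, μ x * ⟪x, b i⟫ ^ 2 := by
      have he : ∀ x ∈ X, μ x * ⟪x, b i⟫ ^ 2 / ‖b i‖ ^ 2 = μ x * ⟪x, b i⟫ ^ 2 := by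
        intro x hx; rw [hbnorm i]; ring
      rw [← Finset.sum_congr rfl he]
      exact (hiso (b i) (hbne i)).1
    have hsplit := Finset.sum_filter_add_sum_filter_not X
      (fun x => |⟪x, h⟫| / ‖h‖ ≤ t / s) (fun x => μ x * ⟪x, b i⟫ ^ 2)
    have hSp := hSpart i
    have hpe : p * ev i ≤ 1 / (4 * (d:ℝ)) :=
      le_trans (by nlinarith [hev_nonneg i]) hIlt.le
    have key : 3 / 4 * (1 / (d:ℝ)) - 1 / (4 * d) = 1 / (2 * d) := by
      field_simp; ring
    rw [hSdef, hXcdef] at *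
    linarith
  have hIcard : I.card + Ic.card = d := by
    rw [hIdef, hIcdef]
    rw [Finset.card_filter_add_card_filter_not]
    simp
  have hIc_le : (Ic.card : ℝ) ≤ 10 * k := by
    have h1 : (Ic.card : ℝ) * (1 / (2 * (d:ℝ))) ≤
        ∑ i ∈ Ic, ∑ x ∈ Xc, μ x * ⟪x, b i⟫ ^ 2 := by
      have := Finset.card_nsmul_le_sum Ic
        (fun i => ∑ x ∈ Xc, μ x * ⟪x, b i⟫ ^ 2) (1 / (2 * (d:ℝ))) hrest
      simpa [nsmul_eq_mul] using this
    have h2 : ∑ i ∈ Ic, ∑ x ∈ Xc, μ x * ⟪x, b i⟫ ^ 2 ≤ 1 - p := by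
      rw [Finset.sum_comm, ← h1p]
      have hterm : ∀ x ∈ Xc, ∑ i ∈ Ic, μ x * ⟪x, b i⟫ ^ 2 ≤ μ x := by
        intro x hx
        have hxX : x ∈ X := Finset.filter_subset _ _ hx
        have hsub : ∑ i ∈ Ic, ⟪x, b i⟫ ^ 2 ≤ 1 := by
          have hfull : ∑ i, ⟪x, b i⟫ ^ 2 = 1 := by
            have := hpar x
            have h' : ∀ j : Fin d, ⟪x, b j⟫ ^ 2 = ⟪b j, x⟫ ^ 2 := fun j => by
              rw [real_inner_comm]
            rw [Finset.sum_congr rfl fun j _ => h' j, this, hXnorm x hxX]; norm_num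
          rw [← hfull]
          exact Finset.sum_le_sum_of_subset_of_nonneg (Finset.subset_univ _)
            (fun j _ _ => sq_nonneg _)
        calc ∑ i ∈ Ic, μ x * ⟪x, b i⟫ ^ 2 = μ x * ∑ i ∈ Ic, ⟪x, b i⟫ ^ 2 := by
              rw [Finset.mul_sum]
          _ ≤ μ x * 1 := by
              exact mul_le_mul_of_nonneg_left hsub (hμ0 x hxX)
          _ = μ x := mul_one _
      exact Finset.sum_le_sum hterm
    have h3 : 1 - p ≤ 5 * (k:ℝ) / d := by linarith
    have h4 : (Ic.card : ℝ) * (1 / (2 * d)) ≤ 5 * k / d := le_trans h1 (le_trans h2 h3)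
    have h5 := mul_le_mul_of_nonneg_right h4 (by positivity : (0:ℝ) ≤ 2 * d)
    have e1 : (Ic.card : ℝ) * (1 / (2 * d)) * (2 * d) = Ic.card := by field_simp
    have e2 : 5 * (k:ℝ) / d * (2 * d) = 10 * k := by field_simp; ring
    rw [e1, e2] at h5
    exact h5
  have hbV : ∀ i ∈ I, b i ∈ V := by
    intro i hi
    have hle : Module.End.eigenspace A (ev i) ≤ V := by
      rw [hV]
      exact le_iSup₂ (f := fun lam (_ : 1 / (4 * (d:ℝ)) ≤ lam) => Module.End.eigenspace A lam)
        (ev i) ((Finset.mem_filter.mp hi).2)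
    exact hle (Module.End.mem_eigenspace_iff.mpr (hApply i))
  have hcard_le : I.card ≤ Module.finrank ℝ V := by
    have h2 : LinearIndependent ℝ (fun i : {i // i ∈ I} => b i.1) :=
      (b.orthonormal.linearIndependent).comp Subtype.val Subtype.val_injective
    have hli : LinearIndependent ℝ (fun i : {i // i ∈ I} => (⟨b i.1, hbV i.1 i.2⟩ : V)) :=
      LinearIndependent.of_comp V.subtype h2
    have := hli.fintype_card_le_finrank
    simpa [Fintype.card_coe] using this
  constructor
  · have : (d:ℝ) = (I.card : ℝ) + Ic.card := by exact_mod_cast hIcard.symm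
    have hc : (I.card : ℝ) ≤ Module.finrank ℝ V := by exact_mod_cast hcard_le
    linarith
  · -- Part 2: margin bound
    intro v hv
    have hs0 : (0:ℝ) < s := by linarith
    have hts : 0 ≤ t / s := le_of_lt (div_pos ht hs0)
    have hh0 : (0:ℝ) < ‖h‖ := norm_pos_iff.mpr hh
    set c : Fin d → ℝ := fun i => ⟪b i, v⟫ with hcdef
    -- coefficients vanish off I
    have hcoef : ∀ i ∈ Ic, ⟪b i, v⟫ = 0 := by
      have hVle : V ≤ ⨅ i ∈ Ic, (ℝ ∙ (b i))ᗮ := by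
        rw [hV]
        refine iSup₂_le fun lam hlam => ?_
        intro w hw
        rw [Submodule.mem_iInf]
        intro i
        rw [Submodule.mem_iInf]
        intro hi
        rw [Submodule.mem_orthogonal_singleton_iff_inner_right]
        have hIlt : ev i < 1 / (4 * (d:ℝ)) := not_le.mp (Finset.mem_filter.mp hi).2
        have hne : ev i ≠ lam := fun hEq => absurd (hEq ▸ hlam) (not_le.mpr hIlt)
        have hAw : A w = lam • w := Module.End.mem_eigenspace_iff.mp hw
        have h1 : ev i * ⟪b i, w⟫ = lam * ⟪b i, w⟫ := by
          have h2 := hAsym (b i) w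
          rw [hApply i, hAw, real_inner_smul_left, real_inner_smul_right] at h2
          exact h2
        have h3 : (ev i - lam) * ⟪b i, w⟫ = 0 := by ring_nf; linarith
        rcases mul_eq_zero.mp h3 with h4 | h4
        · exact absurd (sub_eq_zero.mp h4) hne
        · exact h4
      intro i hi
      have hm := hVle hv
      rw [Submodule.mem_iInf] at hm
      have hm' := hm i
      rw [Submodule.mem_iInf] at hm'
      exact Submodule.mem_orthogonal_singleton_iff_inner_right.mp (hm' hi)
    have hevI : ∀ i ∈ I, 1 / (4 * (d:ℝ)) ≤ ev i := fun i hi => (Finset.mem_filter.mp hi).2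
    have hevpos : ∀ i ∈ I, 0 < ev i := fun i hi =>
      lt_of_lt_of_le (by positivity) (hevI i hi)
    obtain ⟨u, hudef⟩ : ∃ u : EuclideanSpace ℝ (Fin d), u = ∑ i ∈ I, (c i / ev i) • b i :=
      ⟨_, rfl⟩
    have hAu : A u = v := by
      have h1 : A u = ∑ i ∈ I, (c i / ev i) • A (b i) := by
        rw [hudef, map_sum]; simp [map_smul]
      rw [h1]
      have h2 : ∀ i ∈ I, (c i / ev i) • A (b i) = c i • b i := by
        intro i hi
        rw [hApply i, smul_smul, div_mul_cancel₀ _ (hevpos i hi).ne']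
      rw [Finset.sum_congr rfl h2]
      have h3 : ∑ i ∈ I, c i • b i = ∑ i, c i • b i := by
        apply Finset.sum_subset (Finset.subset_univ _)
        intro i _ hiI
        have hiIc : i ∈ Ic := by
          rw [hIcdef, Finset.mem_filter]
          rw [hIdef, Finset.mem_filter] at hiI
          exact ⟨Finset.mem_univ _, fun hc => hiI ⟨Finset.mem_univ _, hc⟩⟩
        simp only [hcdef]
        rw [hcoef i hiIc, zero_smul]
      rw [h3, hcdef]
      exact b.sum_repr' v
    -- norm bound on u
    have hbu : ∀ j, ⟪b j, u⟫ = if j ∈ I then c j / ev j else 0 := by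
      intro j
      rw [hudef, inner_sum]
      have h1 : ∀ i ∈ I, ⟪b j, (c i / ev i) • b i⟫ = if j = i then c i / ev i else 0 := by
        intro i hi
        rw [real_inner_smul_right, orthonormal_iff_ite.mp b.orthonormal j i]
        by_cases hji : j = i <;> simp [hji]
      rw [Finset.sum_congr rfl h1, Finset.sum_ite_eq]
    have hu_sq : ‖u‖ ^ 2 ≤ (4 * d * ‖v‖) ^ 2 := by
      have h1 : ‖u‖ ^ 2 = ∑ j ∈ I, (c j / ev j) ^ 2 := by
        have h2 : ∀ j : Fin d, ⟪b j, u⟫ ^ 2 = if j ∈ I then (c j / ev j) ^ 2 else 0 := by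
          intro j
          rw [hbu j]
          by_cases hj : j ∈ I <;> simp [hj]
        rw [← hpar u, Finset.sum_congr rfl fun j _ => h2 j, Finset.sum_ite_mem,
          Finset.univ_inter]
      have h3 : ∀ j ∈ I, (c j / ev j) ^ 2 ≤ (4 * (d:ℝ)) ^ 2 * c j ^ 2 := by
        intro j hj
        have he1 : 1 / ev j ≤ 4 * (d:ℝ) := by
          rw [div_le_iff₀ (hevpos j hj)]
          have hkey := hevI j hj
          rw [div_le_iff₀ (by positivity : (0:ℝ) < 4 * d)] at hkey
          nlinarith
        have he0 : (0:ℝ) ≤ 1 / ev j := le_of_lt (div_pos one_pos (hevpos j hj))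
        calc (c j / ev j) ^ 2 = c j ^ 2 * (1 / ev j) ^ 2 := by
              rw [← mul_pow]; ring_nf
          _ ≤ c j ^ 2 * (4 * (d:ℝ)) ^ 2 :=
              mul_le_mul_of_nonneg_left (pow_le_pow_left₀ he0 he1 2) (sq_nonneg _)
          _ = (4 * (d:ℝ)) ^ 2 * c j ^ 2 := mul_comm _ _
      calc ‖u‖ ^ 2 = ∑ j ∈ I, (c j / ev j) ^ 2 := h1
        _ ≤ ∑ j ∈ I, (4 * (d:ℝ)) ^ 2 * c j ^ 2 := Finset.sum_le_sum h3
        _ ≤ ∑ j, (4 * (d:ℝ)) ^ 2 * c j ^ 2 :=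
            Finset.sum_le_sum_of_subset_of_nonneg (Finset.subset_univ _)
              (fun j _ _ => by positivity)
        _ = (4 * (d:ℝ)) ^ 2 * ∑ j, c j ^ 2 := by rw [Finset.mul_sum]
        _ = (4 * (d:ℝ)) ^ 2 * ‖v‖ ^ 2 := by
            simp only [hcdef]
            rw [hpar v]
        _ = (4 * d * ‖v‖) ^ 2 := by ring
    have hu_norm : ‖u‖ ≤ 4 * d * ‖v‖ := by
      have h0 : (0:ℝ) ≤ 4 * d * ‖v‖ := by positivity
      nlinarith [norm_nonneg u]
    -- final computation
    have hinner : ⟪v, h⟫ = ∑ x ∈ S, (μ x / p) * (⟪x, u⟫ * ⟪x, h⟫) := by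
      rw [← hAu, hA u, sum_inner]
      exact Finset.sum_congr rfl fun x _ => by
        rw [real_inner_smul_left, real_inner_smul_left]
    have habs : |⟪v, h⟫| ≤ ‖u‖ * ((t / s) * ‖h‖) := by
      rw [hinner]
      calc |∑ x ∈ S, (μ x / p) * (⟪x, u⟫ * ⟪x, h⟫)|
          ≤ ∑ x ∈ S, |(μ x / p) * (⟪x, u⟫ * ⟪x, h⟫)| := Finset.abs_sum_le_sum_abs _ _
        _ ≤ ∑ x ∈ S, (μ x / p) * (‖u‖ * ((t / s) * ‖h‖)) := by
            refine Finset.sum_le_sum fun x hx => ?_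
            have hxX : x ∈ X := Finset.filter_subset _ _ hx
            have hx1 : |⟪x, u⟫| ≤ ‖u‖ := by
              have := abs_real_inner_le_norm x u
              rwa [hXnorm x hxX, one_mul] at this
            have hx2 : |⟪x, h⟫| ≤ (t / s) * ‖h‖ := by
              have hx3 : |⟪x, h⟫| / ‖h‖ ≤ t / s := by
                rw [hSdef, Finset.mem_filter] at hx
                exact hx.2
              rw [div_le_iff₀ hh0] at hx3
              exact hx3
            have hnn : 0 ≤ μ x / p := div_nonneg (hμS x hx) hp0.le
            rw [abs_mul, abs_mul, abs_of_nonneg hnn]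
            have := mul_le_mul hx1 hx2 (abs_nonneg _) (norm_nonneg u)
            exact mul_le_mul_of_nonneg_left this hnn
        _ = (∑ x ∈ S, μ x / p) * (‖u‖ * ((t / s) * ‖h‖)) := by
            rw [← Finset.sum_mul]
        _ = ‖u‖ * ((t / s) * ‖h‖) := by
            rw [← Finset.sum_div, ← hpdef, div_self hp0.ne', one_mul]
    rw [div_le_iff₀ hh0]
    calc |⟪v, h⟫| ≤ ‖u‖ * ((t / s) * ‖h‖) := habs
      _ ≤ (4 * d * ‖v‖) * ((t / s) * ‖h‖) := by
          refine mul_le_mul_of_nonneg_right hu_norm (by positivity)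
      _ = 4 * ‖v‖ * d * (t / s) * ‖h‖ := by ring
end

section
/- Let M be a d×m real matrix with unit-norm columns x_1,…,x_m, D a diagonal m×m matrix with nonnegative diagonal entries summing to 1, and let v be in the span of eigenvectors of M D Mᵀ with eigenvalue at least L > 0. If every column satisfies |⟨x_j,h⟩| ≤ τ for a unit vector h, then |⟨v,h⟩| ≤ (τ/L)·‖v‖. -/
open scoped RealInnerProductSpace BigOperators
open Matrix

/-!
The margin bound comes from inverting `A = M D Mᵀ` on the top of its spectrum. Expanding `v` in an
orthonormal eigenbasis of `A`, only eigenvectors with eigenvalue `λ ≥ L` occur, so dividing each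
coordinate by its eigenvalue gives `w` with `A w = v` and `‖w‖ ≤ ‖v‖ / L`. Then
`⟪v, h⟫ = ⟪A w, h⟫ = ∑ⱼ Dⱼ ⟪xⱼ, w⟫ ⟪xⱼ, h⟫` is a convex combination of numbers bounded by `‖w‖ τ`.
-/

namespace LinearMap.IsSymmetric

open Module.End

variable {E : Type*} [NormedAddCommGroup E] [InnerProductSpace ℝ E] {T : E →ₗ[ℝ] E}

theorem isOrtho_eigenspace_iSup_eigenspace (hT : T.IsSymmetric) {μ L : ℝ} (hμ : μ < L) :
    eigenspace T μ ⟂ ⨆ (lam : ℝ) (_ : L ≤ lam), eigenspace T lam :=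
  Submodule.isOrtho_iSup_right.mpr fun _ ↦ Submodule.isOrtho_iSup_right.mpr fun hlam ↦
    hT.orthogonalFamily_eigenspaces.isOrtho (hμ.trans_le hlam).ne

theorem exists_preimage_norm_le_of_mem_iSup_eigenspace [FiniteDimensional ℝ E]
    (hT : T.IsSymmetric) {L : ℝ} (hL : 0 < L) {v : E}
    (hv : v ∈ ⨆ (lam : ℝ) (_ : L ≤ lam), eigenspace T lam) :
    ∃ w, T w = v ∧ ‖w‖ ≤ ‖v‖ / L := by
  set b := hT.eigenvectorBasis rfl
  set μ := hT.eigenvalues rfl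
  set c : Fin _ → ℝ := fun i ↦ ⟪b i, v⟫
  have hb : ∀ i, T (b i) = μ i • b i := hT.apply_eigenvectorBasis rfl
  have hsupp : ∀ i, c i ≠ 0 → L ≤ μ i := fun i hci ↦ by
    by_contra! hi
    exact hci ((hT.isOrtho_eigenspace_iSup_eigenspace hi).inner_eq
      (hT.hasEigenvector_eigenvectorBasis rfl i).1 hv)
  have hcancel : ∀ i, c i / μ i * μ i = c i := fun i ↦ by
    by_cases hci : c i = 0
    · simp [hci]
    · exact div_mul_cancel₀ _ (hL.trans_le (hsupp i hci)).ne'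
  have hcoord : ∀ i, (c i / μ i) ^ 2 ≤ c i ^ 2 / L ^ 2 := fun i ↦ by
    by_cases hci : c i = 0
    · simp [hci]
    · rw [div_pow]
      gcongr
      exact hsupp i hci
  refine ⟨∑ i, (c i / μ i) • b i, ?_, ?_⟩
  · simp_rw [map_sum, map_smul, hb, smul_smul, hcancel]
    exact b.sum_repr' v
  · have hsq : ‖∑ i, (c i / μ i) • b i‖ ^ 2 ≤ (‖v‖ / L) ^ 2 := by
      rw [← b.sum_sq_inner_right, div_pow, ← b.sum_sq_inner_right, Finset.sum_div]
      refine Finset.sum_le_sum fun i _ ↦ ?_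
      rw [b.orthonormal.inner_right_fintype]
      exact hcoord i
    exact (pow_le_pow_iff_left₀ (norm_nonneg _) (by positivity) two_ne_zero).mp hsq

end LinearMap.IsSymmetric

theorem abs_sum_mul_le_of_abs_le {ι : Type*} [Fintype ι] {w x : ι → ℝ} {C : ℝ}
    (hw0 : ∀ j, 0 ≤ w j) (hw1 : ∑ j, w j = 1) (hx : ∀ j, |x j| ≤ C) :
    |∑ j, w j * x j| ≤ C :=
  calc |∑ j, w j * x j| ≤ ∑ j, |w j * x j| := Finset.abs_sum_le_sum_abs _ _
    _ ≤ ∑ j, w j * C := Finset.sum_le_sum fun j _ ↦ by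
        rw [abs_mul, abs_of_nonneg (hw0 j)]
        exact mul_le_mul_of_nonneg_left (hx j) (hw0 j)
    _ = C := by rw [← Finset.sum_mul, hw1, one_mul]

theorem abs_dotProduct_le_norm_of_sum_sq_eq_one {ι : Type*} [Fintype ι] {a : ι → ℝ}
    (ha : ∑ i, a i ^ 2 = 1) (x : EuclideanSpace ℝ ι) : |a ⬝ᵥ x.ofLp| ≤ ‖x‖ := by
  have hnorm : ‖WithLp.toLp 2 a‖ = 1 := by
    rw [EuclideanSpace.norm_eq]
    simp [ha]
  simpa [hnorm, EuclideanSpace.inner_eq_star_dotProduct, dotProduct_comm] using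
    abs_real_inner_le_norm (WithLp.toLp 2 a) x

theorem Matrix.real_inner_toEuclideanLin_mul_diagonal_mul_transpose {ι κ : Type*} [Fintype ι]
    [DecidableEq ι] [Fintype κ] [DecidableEq κ] (M : Matrix ι κ ℝ) (D : κ → ℝ)
    (x y : EuclideanSpace ℝ ι) :
    ⟪toEuclideanLin (M * diagonal D * Mᵀ) x, y⟫ =
      ∑ j, D j * ((Mᵀ *ᵥ x.ofLp) j * (Mᵀ *ᵥ y.ofLp) j) := by
  rw [EuclideanSpace.inner_eq_star_dotProduct, star_trivial, ofLp_toLpLin, toLin'_apply,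
    ← mulVec_mulVec, ← mulVec_mulVec, dotProduct_mulVec, ← mulVec_transpose]
  simp only [dotProduct, mulVec_diagonal]
  exact Finset.sum_congr rfl fun j _ ↦ by ring

theorem stmt_8_general (d m : ℕ) (M : Matrix (Fin d) (Fin m) ℝ) (Dg : Fin m → ℝ)
    (hD0 : ∀ j, 0 ≤ Dg j) (hD1 : ∑ j, Dg j = 1)
    (hcol : ∀ j, ∑ i, (M i j) ^ 2 = 1)
    (h : EuclideanSpace ℝ (Fin d))
    (τ L : ℝ) (hτ : 0 ≤ τ) (hL : 0 < L)
    (hmar : ∀ j, |∑ i, M i j * h i| ≤ τ)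
    (v : EuclideanSpace ℝ (Fin d))
    (hv : v ∈ ⨆ (lam : ℝ) (_ : L ≤ lam),
      Module.End.eigenspace
        (Matrix.toEuclideanLin (M * Matrix.diagonal Dg * Mᵀ)) lam) :
    |⟪v, h⟫| ≤ (τ / L) * ‖v‖ := by
  have hT : (toEuclideanLin (M * diagonal Dg * Mᵀ)).IsSymmetric :=
    isSymmetric_toEuclideanLin_iff.mpr <| by
      simpa [conjTranspose_eq_transpose_of_trivial] using
        isHermitian_mul_mul_conjTranspose M (isHermitian_diagonal Dg)
  obtain ⟨w, rfl, hw⟩ := hT.exists_preimage_norm_le_of_mem_iSup_eigenspace hL hv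
  have hterm : ∀ j, |(Mᵀ *ᵥ w.ofLp) j * (Mᵀ *ᵥ h.ofLp) j| ≤ ‖w‖ * τ := fun j ↦ by
    rw [abs_mul]
    exact mul_le_mul (abs_dotProduct_le_norm_of_sum_sq_eq_one (hcol j) w) (hmar j)
      (abs_nonneg _) (norm_nonneg w)
  calc |⟪toEuclideanLin (M * diagonal Dg * Mᵀ) w, h⟫| ≤ ‖w‖ * τ := by
        rw [real_inner_toEuclideanLin_mul_diagonal_mul_transpose]
        exact abs_sum_mul_le_of_abs_le hD0 hD1 hterm
    _ ≤ ‖toEuclideanLin (M * diagonal Dg * Mᵀ) w‖ / L * τ := by gcongr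
    _ = τ / L * ‖toEuclideanLin (M * diagonal Dg * Mᵀ) w‖ := by ring

/-- Let `M` be a `d × m` matrix with unit-norm columns, `D` a nonnegative
diagonal matrix with trace `1`, and let `v` lie in the span of eigenvectors of `M D Mᵀ`
with eigenvalue at least `L > 0`. If every column of `M` has margin at most `τ` with a
unit vector `h`, then `|⟪v,h⟫| ≤ (τ/L)·‖v‖`. -/
theorem stmt_8 (d m : ℕ) (M : Matrix (Fin d) (Fin m) ℝ) (Dg : Fin m → ℝ)
    (hD0 : ∀ j, 0 ≤ Dg j) (hD1 : ∑ j, Dg j = 1)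
    (hcol : ∀ j, ∑ i, (M i j) ^ 2 = 1)
    (h : EuclideanSpace ℝ (Fin d)) (hh : ‖h‖ = 1)
    (τ L : ℝ) (hτ : 0 ≤ τ) (hL : 0 < L)
    (hmar : ∀ j, |∑ i, M i j * h i| ≤ τ)
    (v : EuclideanSpace ℝ (Fin d))
    (hv : v ∈ ⨆ (lam : ℝ) (_ : L ≤ lam),
      Module.End.eigenspace
        (Matrix.toEuclideanLin (M * Matrix.diagonal Dg * Mᵀ)) lam) :
    |⟪v, h⟫| ≤ (τ / L) * ‖v‖ :=
  stmt_8_general d m M Dg hD0 hD1 hcol h τ L hτ hL hmar v hv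
end

section
/- Let X be a finite set of unit vectors in R^d with probability distribution μ, and suppose there exists a k-dimensional subspace V (0 < k < d) with μ(X ∩ V) > k/d. Then for every invertible linear transformation T: R^d → R^d, the transformed pair (X_T, μ_T) is not in ε-isotropic position for any ε < (μ(X∩V) − k/d)·d/k. -/
open scoped RealInnerProductSpace BigOperators Classical

/-- If some `k`-dimensional subspace `V` (with `0 < k < d`) carries more
than a `k/d` fraction of `(X,μ)`, then for every invertible linear `T` the transformed
pair `(X_T, μ_T)` fails to be in `ε`-isotropic position for every
`ε < (μ(X∩V) − k/d)·d/k`. -/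
theorem stmt_10 (d k : ℕ) (hk0 : 0 < k) (hkd : k < d)
    (X : Finset (EuclideanSpace ℝ (Fin d))) (μ : EuclideanSpace ℝ (Fin d) → ℝ)
    (hμ0 : ∀ x ∈ X, 0 ≤ μ x) (hμ1 : ∑ x ∈ X, μ x = 1) (hunit : ∀ x ∈ X, ‖x‖ = 1)
    (V : Submodule ℝ (EuclideanSpace ℝ (Fin d))) (hV : Module.finrank ℝ V = k)
    (hmass : (k : ℝ) / d < ∑ x ∈ X.filter (fun x => x ∈ V), μ x)
    (T : EuclideanSpace ℝ (Fin d) ≃ₗ[ℝ] EuclideanSpace ℝ (Fin d))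
    (ε : ℝ) (hε : 0 ≤ ε)
    (hεlt : ε < ((∑ x ∈ X.filter (fun x => x ∈ V), μ x) - (k : ℝ) / d) * d / k) :
    ¬ (∀ v : EuclideanSpace ℝ (Fin d), v ≠ 0 →
        (1 - ε) / d ≤ ∑ x ∈ X, μ x * ⟪T x, v⟫ ^ 2 / (‖T x‖ ^ 2 * ‖v‖ ^ 2) ∧
        ∑ x ∈ X, μ x * ⟪T x, v⟫ ^ 2 / (‖T x‖ ^ 2 * ‖v‖ ^ 2) ≤ (1 + ε) / d) := by
  intro hiso
  set W : Submodule ℝ (EuclideanSpace ℝ (Fin d)) :=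
    V.map (T : EuclideanSpace ℝ (Fin d) →ₗ[ℝ] EuclideanSpace ℝ (Fin d)) with hW
  have hd0 : (0:ℝ) < d := by exact_mod_cast hk0.trans hkd
  have hk0' : (0:ℝ) < k := by exact_mod_cast hk0
  have hWk : Module.finrank ℝ W = k := by
    rw [hW, LinearEquiv.finrank_map_eq T V, hV]
  have : FiniteDimensional ℝ W := FiniteDimensional.finiteDimensional_submodule W
  let b : OrthonormalBasis (Fin (Module.finrank ℝ W)) ℝ W := stdOrthonormalBasis ℝ W
  have hbnorm : ∀ i, ‖(b i : EuclideanSpace ℝ (Fin d))‖ = 1 := fun i => b.orthonormal.1 i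
  have hbne : ∀ i, (b i : EuclideanSpace ℝ (Fin d)) ≠ 0 := fun i => by
    intro h; have := hbnorm i; rw [h] at this; simp at this
  have parseval : ∀ w : EuclideanSpace ℝ (Fin d), w ∈ W →
      ∑ i, ⟪w, (b i : EuclideanSpace ℝ (Fin d))⟫ ^ 2 = ‖w‖ ^ 2 := by
    intro w hw
    have h1 := b.sum_inner_mul_inner (⟨w, hw⟩ : W) (⟨w, hw⟩ : W)
    have h2' : ∀ i, ⟪b i, (⟨w, hw⟩ : W)⟫ = ⟪w, (b i : EuclideanSpace ℝ (Fin d))⟫ := by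
      intro i; rw [real_inner_comm]; rfl
    have h3 : ⟪(⟨w, hw⟩ : W), (⟨w, hw⟩ : W)⟫ = ‖w‖ ^ 2 := by
      rw [real_inner_self_eq_norm_sq]; rfl
    calc ∑ i, ⟪w, (b i : EuclideanSpace ℝ (Fin d))⟫ ^ 2
        = ∑ i, ⟪(⟨w, hw⟩ : W), b i⟫ * ⟪b i, (⟨w, hw⟩ : W)⟫ := by
          refine Finset.sum_congr rfl fun i _ => ?_
          rw [h2' i, sq]; rfl
      _ = ‖w‖ ^ 2 := by rw [h1, h3]
  have hTx : ∀ x ∈ X, ‖T x‖ ≠ 0 := by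
    intro x hx h
    have hx0 : x = 0 := T.map_eq_zero_iff.mp (norm_eq_zero.mp h)
    have h1 := hunit x hx
    rw [hx0, norm_zero] at h1
    exact one_ne_zero h1.symm
  have key : ∑ x ∈ X.filter (fun x => x ∈ V), μ x ≤ (k : ℝ) * ((1 + ε) / d) := by
    have hsum : ∀ i, ∑ x ∈ X, μ x * ⟪T x, (b i : EuclideanSpace ℝ (Fin d))⟫ ^ 2 /
        (‖T x‖ ^ 2 * ‖(b i : EuclideanSpace ℝ (Fin d))‖ ^ 2) ≤ (1 + ε) / d :=
      fun i => (hiso _ (hbne i)).2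
    have hswap : ∑ i, ∑ x ∈ X, μ x * ⟪T x, (b i : EuclideanSpace ℝ (Fin d))⟫ ^ 2 /
        (‖T x‖ ^ 2 * ‖(b i : EuclideanSpace ℝ (Fin d))‖ ^ 2)
        ≤ (k : ℝ) * ((1 + ε) / d) := by
      calc ∑ i, ∑ x ∈ X, μ x * ⟪T x, (b i : EuclideanSpace ℝ (Fin d))⟫ ^ 2 /
            (‖T x‖ ^ 2 * ‖(b i : EuclideanSpace ℝ (Fin d))‖ ^ 2)
          ≤ ∑ _i : Fin (Module.finrank ℝ W), (1 + ε) / d :=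
            Finset.sum_le_sum fun i _ => hsum i
        _ = (k : ℝ) * ((1 + ε) / d) := by
            rw [Finset.sum_const, Finset.card_univ, Fintype.card_fin, hWk, nsmul_eq_mul]
    refine le_trans ?_ hswap
    rw [Finset.sum_comm]
    calc ∑ x ∈ X.filter (fun x => x ∈ V), μ x
        = ∑ x ∈ X.filter (fun x => x ∈ V), ∑ i, μ x * ⟪T x, (b i : EuclideanSpace ℝ (Fin d))⟫ ^ 2 /
            (‖T x‖ ^ 2 * ‖(b i : EuclideanSpace ℝ (Fin d))‖ ^ 2) := by
          refine Finset.sum_congr rfl fun x hx => ?_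
          obtain ⟨hxX, hxV⟩ := Finset.mem_filter.mp hx
          have hTW : T x ∈ W := Submodule.mem_map_of_mem hxV
          have hTn := hTx x hxX
          calc μ x = μ x * (‖T x‖ ^ 2 / ‖T x‖ ^ 2) := by
                rw [div_self (pow_ne_zero 2 hTn), mul_one]
            _ = μ x * ((∑ i, ⟪T x, (b i : EuclideanSpace ℝ (Fin d))⟫ ^ 2) / ‖T x‖ ^ 2) := by
                rw [parseval _ hTW]
            _ = ∑ i, μ x * ⟪T x, (b i : EuclideanSpace ℝ (Fin d))⟫ ^ 2 /
                  (‖T x‖ ^ 2 * ‖(b i : EuclideanSpace ℝ (Fin d))‖ ^ 2) := by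
                rw [Finset.sum_div, Finset.mul_sum]
                refine Finset.sum_congr rfl fun i _ => ?_
                rw [hbnorm i]; ring
      _ ≤ ∑ x ∈ X, ∑ i, μ x * ⟪T x, (b i : EuclideanSpace ℝ (Fin d))⟫ ^ 2 /
            (‖T x‖ ^ 2 * ‖(b i : EuclideanSpace ℝ (Fin d))‖ ^ 2) := by
          refine Finset.sum_le_sum_of_subset_of_nonneg (Finset.filter_subset _ _) ?_
          intro x hx _
          refine Finset.sum_nonneg fun i _ => ?_
          have := hμ0 x hx
          positivity
  have h1 : ((∑ x ∈ X.filter (fun x => x ∈ V), μ x) - (k : ℝ) / d) * d / k ≤ ε := by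
    rw [div_le_iff₀ hk0']
    have hle : (∑ x ∈ X.filter (fun x => x ∈ V), μ x) * d ≤ (k : ℝ) * (1 + ε) := by
      have h := mul_le_mul_of_nonneg_right key (le_of_lt hd0)
      calc (∑ x ∈ X.filter (fun x => x ∈ V), μ x) * d ≤ (k : ℝ) * ((1 + ε) / d) * d := h
        _ = (k : ℝ) * (1 + ε) := by field_simp
    have hdd : (k:ℝ)/d*d = k := div_mul_cancel₀ _ hd0.ne'
    nlinarith [hle, hdd]
  exact absurd hεlt (not_lt.mpr h1)
end

section
/- Let X be a finite set of unit vectors in R^d with probability distribution μ. The following are equivalent: (1) the vector d·μ (indexed by X) lies in the convex hull K(X) of indicator vectors of bases of R^d contained in X; (2) for every 1 ≤ k ≤ d, every k-dimensional subspace V satisfies μ(X ∩ V) ≤ k/d. -/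
/-!
(1) ⇒ (2): a basis meets a `k`-dimensional subspace in at most `k` vectors, and this linear
inequality passes to convex combinations.

(2) ⇒ (1): (2) says that `d • μ` lies in the base polytope
`{y ≥ 0, y(S) ≤ rk S for S ⊆ X, y(X) = d}` of the linear matroid on `X` (a set of rank `0` is
empty, as `X` contains no zero vector). By Krein–Milman this compact convex set is the convex
hull of its extreme points, and these are indicators of bases. Indeed, the rank is submodular,
so tight sets are closed under intersection. If an extreme point `y` had a non-integral
coordinate, a minimal tight set `T` containing one, `a`, would by integrality of `rk T` contain
a second one, `b`; by minimality `a` and `b` lie in the same tight sets, so `y ± ε (e_a - e_b)`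
stays in the polytope for small `ε`.
-/

open scoped BigOperators Classical

open Filter Topology Module Submodule

theorem eq_zero_of_mem_extremePoints_of_add_mem_of_sub_mem {E : Type*} [AddCommGroup E]
    [Module ℝ E] {A : Set E} {x v : E} (hx : x ∈ A.extremePoints ℝ) (hadd : x + v ∈ A)
    (hsub : x - v ∈ A) : v = 0 := by
  have hmid : x ∈ openSegment ℝ (x + v) (x - v) :=
    ⟨1 / 2, 1 / 2, by norm_num, by norm_num, by norm_num, by module⟩
  simpa using hx.2 hadd hsub hmid

theorem eventually_forall_add_mul_le {ι : Type*} (I : Finset ι) {a b c : ι → ℝ}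
    (hac : ∀ j ∈ I, a j ≤ c j) (hb : ∀ j ∈ I, a j = c j → b j = 0) :
    ∀ᶠ t in 𝓝 (0 : ℝ), ∀ j ∈ I, a j + t * b j ≤ c j := by
  refine (eventually_all_finset I).2 fun j hj => ?_
  rcases (hac j hj).eq_or_lt with htight | hslack
  · simp [hb j hj htight, htight]
  · have hlim : Tendsto (fun t : ℝ => a j + t * b j) (𝓝 0) (𝓝 (a j)) :=
      Continuous.tendsto' (by fun_prop) 0 (a j) (by simp)
    exact (hlim.eventually (gt_mem_nhds hslack)).mono fun _ => le_of_lt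

section BasePolytope

variable {α : Type*} {r : Finset α → ℕ} {X : Finset α} {n : ℕ} {y : α → ℝ}

variable (r X n) in
def basePolytope : Set (α → ℝ) :=
  {y | (∀ i, 0 ≤ y i) ∧ (∀ i ∉ X, y i = 0) ∧ (∀ S ⊆ X, ∑ i ∈ S, y i ≤ r S) ∧
    ∑ i ∈ X, y i = n}

variable (r) in
def IsTight (y : α → ℝ) (S : Finset α) : Prop := ∑ i ∈ S, y i = r S

theorem convex_basePolytope : Convex ℝ (basePolytope r X n) := by
  rintro y ⟨hy0, hyX, hyS, hysum⟩ z ⟨hz0, hzX, hzS, hzsum⟩ a b ha hb hab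
  simp only [basePolytope, Set.mem_ofPred_eq, Pi.add_apply, Pi.smul_apply, smul_eq_mul,
    Finset.sum_add_distrib, ← Finset.mul_sum]
  refine ⟨fun i => by have := hy0 i; have := hz0 i; positivity,
    fun i hi => by simp [hyX i hi, hzX i hi], fun S hS => ?_, ?_⟩
  · nlinarith [hyS S hS, hzS S hS]
  · rw [hysum, hzsum]
    linear_combination (n : ℝ) * hab

theorem isClosed_basePolytope : IsClosed (basePolytope r X n) := by
  simp only [basePolytope, Set.ofPred_and, Set.ofPred_forall]
  refine (isClosed_iInter fun i => isClosed_le continuous_const (continuous_apply i)).inter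
    ((isClosed_iInter fun i => isClosed_iInter fun _ =>
      isClosed_eq (continuous_apply i) continuous_const).inter
    ((isClosed_iInter fun S => isClosed_iInter fun _ =>
      isClosed_le (by fun_prop) continuous_const).inter
    (isClosed_eq (by fun_prop) continuous_const)))

theorem isCompact_basePolytope : IsCompact (basePolytope r X n) := by
  refine (isCompact_Icc (a := 0) (b := fun _ => (n : ℝ))).of_isClosed_subset
    isClosed_basePolytope ?_
  rintro y ⟨hy0, hyX, -, hysum⟩
  refine ⟨hy0, fun i => ?_⟩
  by_cases hi : i ∈ X
  · exact hysum ▸ Finset.single_le_sum (fun j _ => hy0 j) hi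
  · simp [hyX i hi]

theorem isTight_ground (hy : y ∈ basePolytope r X n) (hrX : r X ≤ n) : IsTight r y X := by
  obtain ⟨-, -, hyS, hysum⟩ := hy
  exact le_antisymm (hyS X subset_rfl) (by rw [hysum]; exact_mod_cast hrX)

variable [DecidableEq α]

def IsSubmodular (r : Finset α → ℕ) : Prop :=
  ∀ S T, r (S ∪ T) + r (S ∩ T) ≤ r S + r T

theorem IsTight.inter (hr : IsSubmodular r)
    (hy : y ∈ basePolytope r X n) {S T : Finset α} (hSX : S ⊆ X) (hTX : T ⊆ X)
    (hS : IsTight r y S) (hT : IsTight r y T) : IsTight r y (S ∩ T) := by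
  obtain ⟨-, -, hyS, -⟩ := hy
  have hsub : (r (S ∪ T) : ℝ) + r (S ∩ T) ≤ r S + r T := by exact_mod_cast hr S T
  have hunion := hyS (S ∪ T) (Finset.union_subset hSX hTX)
  have hinter := hyS (S ∩ T) (Finset.inter_subset_left.trans hSX)
  have hsum := Finset.sum_union_inter (s₁ := S) (s₂ := T) (f := y)
  unfold IsTight at *
  linarith

theorem notMem_extremePoints_basePolytope (hy : y ∈ basePolytope r X n) {a b : α}
    (ha : a ∈ X) (hb : b ∈ X) (hab : a ≠ b) (hya : 0 < y a) (hyb : 0 < y b)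
    (hsame : ∀ S ⊆ X, IsTight r y S → (a ∈ S ↔ b ∈ S)) :
    y ∉ (basePolytope r X n).extremePoints ℝ := by
  obtain ⟨hy0, hyX, hyS, hysum⟩ := hy
  set w : α → ℝ := Pi.single a 1 - Pi.single b 1
  have hwS : ∀ S : Finset α,
      ∑ i ∈ S, w i = (if a ∈ S then 1 else 0) - (if b ∈ S then 1 else 0) := by
    simp [w, Finset.sum_sub_distrib]
  have hw0 : ∀ i, i ≠ a → i ≠ b → w i = 0 := fun i hia hib => by simp [w, hia, hib]
  have hnonneg : ∀ᶠ t in 𝓝 (0 : ℝ), ∀ i ∈ X, -y i + t * -w i ≤ 0 :=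
    eventually_forall_add_mul_le X (fun i _ => by linarith [hy0 i]) fun i _ hi => by
      rw [hw0 i (by rintro rfl; linarith) (by rintro rfl; linarith), neg_zero]
  have hrank : ∀ᶠ t in 𝓝 (0 : ℝ), ∀ S ∈ X.powerset, ∑ i ∈ S, y i + t * ∑ i ∈ S, w i ≤ r S :=
    eventually_forall_add_mul_le _ (fun S hS => hyS S (Finset.mem_powerset.1 hS)) fun S hS ht => by
      have := hsame S (Finset.mem_powerset.1 hS) ht
      rw [hwS]; split_ifs <;> simp_all
  have hmem : ∀ᶠ t in 𝓝 (0 : ℝ), y + t • w ∈ basePolytope r X n := by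
    filter_upwards [hnonneg, hrank] with t hnn hrk
    refine ⟨fun i => ?_, fun i hi => ?_, fun S hS => ?_, ?_⟩
    · by_cases hi : i ∈ X
      · have := hnn i hi; simp only [Pi.add_apply, Pi.smul_apply, smul_eq_mul]; linarith
      · simp [hyX i hi, hw0 i (ne_of_mem_of_not_mem ha hi).symm (ne_of_mem_of_not_mem hb hi).symm]
    · simp [hyX i hi, hw0 i (ne_of_mem_of_not_mem ha hi).symm (ne_of_mem_of_not_mem hb hi).symm]
    · simpa [Finset.sum_add_distrib, ← Finset.mul_sum] using hrk S (Finset.mem_powerset.2 hS)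
    · simp [Finset.sum_add_distrib, ← Finset.mul_sum, hwS, ha, hb, hysum]
  have hneg : ∀ᶠ t in 𝓝 (0 : ℝ), y + (-t) • w ∈ basePolytope r X n :=
    (continuous_neg.tendsto' (0 : ℝ) 0 neg_zero).eventually hmem
  obtain ⟨t, ⟨hplus, hminus⟩, ht⟩ :=
    ((hmem.and hneg).filter_mono nhdsWithin_le_nhds |>.and self_mem_nhdsWithin).exists
      (f := 𝓝[≠] (0 : ℝ))
  intro hext
  have htw := eq_zero_of_mem_extremePoints_of_add_mem_of_sub_mem hext hplus
    (by simpa [sub_eq_add_neg] using hminus)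
  exact ht (by simpa [w, hab] using congrFun htw a)

theorem exists_ne_notMem_of_sum_mem {ι : Type*} {T : Finset ι} {y : ι → ℝ} {a : ι}
    (hT : ∑ i ∈ T, y i ∈ (⊥ : Subring ℝ)) (ha : a ∈ T) (hya : y a ∉ (⊥ : Subring ℝ)) :
    ∃ b ∈ T, b ≠ a ∧ y b ∉ (⊥ : Subring ℝ) := by
  by_contra! h
  refine hya ?_
  rw [← Finset.add_sum_erase T y ha] at hT
  have hrest := Subring.sum_mem _ fun b hb =>
    h b (Finset.mem_of_mem_erase hb) (Finset.ne_of_mem_erase hb)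
  simpa using sub_mem hT hrest

theorem mem_bot_of_mem_extremePoints_basePolytope (hr : IsSubmodular r)
    (hrX : r X ≤ n) (hy : y ∈ (basePolytope r X n).extremePoints ℝ) (i : α) :
    y i ∈ (⊥ : Subring ℝ) := by
  have hyP := hy.1
  obtain ⟨hy0, hyX, -, -⟩ := hy.1
  by_contra hi
  have hiX : i ∈ X := by
    by_contra h
    exact hi (by simp [hyX i h])
  set 𝒮 := X.powerset.filter fun S => IsTight r y S ∧ ∃ a ∈ S, y a ∉ (⊥ : Subring ℝ)
  obtain ⟨T, hT𝒮, hTmin⟩ := 𝒮.exists_min_image Finset.card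
    ⟨X, by simpa [𝒮, isTight_ground hyP hrX] using ⟨i, hiX, hi⟩⟩
  obtain ⟨hTX, hT, a, haT, hya⟩ := by simpa [𝒮] using hT𝒮
  obtain ⟨b, hbT, hba, hyb⟩ := exists_ne_notMem_of_sum_mem (hT ▸ natCast_mem _ _) haT hya
  have hsub : ∀ S ⊆ X, IsTight r y S → ∀ c ∈ T, y c ∉ (⊥ : Subring ℝ) → c ∈ S → T ⊆ S := by
    intro S hSX hS c hcT hyc hcS
    have hTS : T ∩ S ∈ 𝒮 := by
      simpa [𝒮, Finset.inter_subset_left.trans hTX, hT.inter hr hyP hTX hSX hS] using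
        ⟨c, ⟨hcT, hcS⟩, hyc⟩
    exact Finset.eq_of_subset_of_card_le Finset.inter_subset_left (hTmin _ hTS) ▸
      Finset.inter_subset_right
  have hpos : ∀ c, y c ∉ (⊥ : Subring ℝ) → 0 < y c := fun c hc =>
    (hy0 c).lt_of_ne fun h => hc (h ▸ zero_mem _)
  exact notMem_extremePoints_basePolytope hyP (hTX haT) (hTX hbT) hba.symm
    (hpos a hya) (hpos b hyb)
    (fun S hSX hS => ⟨fun haS => hsub S hSX hS a haT hya haS hbT,
      fun hbS => hsub S hSX hS b hbT hyb hbS haT⟩) hy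

theorem exists_eq_indicator_of_mem_extremePoints_basePolytope
    (hr : IsSubmodular r) (hrX : r X ≤ n) (hr1 : ∀ i ∈ X, r {i} ≤ 1)
    (hy : y ∈ (basePolytope r X n).extremePoints ℝ) :
    ∃ B ⊆ X, B.card = n ∧ n ≤ r B ∧ y = fun i => if i ∈ B then 1 else 0 := by
  obtain ⟨hy0, hyX, hyS, hysum⟩ := hy.1
  have h01 : ∀ i ∈ X, y i = 0 ∨ y i = 1 := by
    intro i hi
    obtain ⟨k, hk⟩ := Subring.mem_bot.1 (mem_bot_of_mem_extremePoints_basePolytope hr hrX hy i)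
    have hle : y i ≤ 1 := by
      simpa using (hyS {i} (by simpa)).trans (by exact_mod_cast hr1 i hi)
    have hk0 := hy0 i
    rw [← hk] at hle hk0 ⊢
    have : k = 0 ∨ k = 1 := by
      have : (0 : ℤ) ≤ k := by exact_mod_cast hk0
      have : k ≤ 1 := by exact_mod_cast hle
      omega
    rcases this with rfl | rfl <;> simp
  set B := X.filter fun i => y i = 1
  have hyB : y = fun i => if i ∈ B then 1 else 0 := by
    funext i
    by_cases hi : i ∈ X
    · rcases h01 i hi with h | h <;> simp [B, hi, h]
    · simp [B, hi, hyX i hi]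
  have hsumB : ∀ S, ∑ i ∈ S, y i = (S.filter (· ∈ B)).card := by
    intro S
    rw [hyB, Finset.sum_boole]
  have hcard : B.card = n := by
    have := hsumB X
    rw [Finset.filter_mem_eq_inter, Finset.inter_eq_right.2 (Finset.filter_subset _ _),
      hysum] at this
    exact_mod_cast this.symm
  refine ⟨B, Finset.filter_subset _ _, hcard, ?_, hyB⟩
  have := hyS B (Finset.filter_subset _ _)
  rw [hsumB, Finset.filter_mem_eq_inter, Finset.inter_self, hcard] at this
  exact_mod_cast this

theorem basePolytope_subset_convexHull
    (hr : IsSubmodular r) (hrX : r X ≤ n) (hr1 : ∀ i ∈ X, r {i} ≤ 1) :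
    basePolytope r X n ⊆
      convexHull ℝ {f | ∃ B ⊆ X, B.card = n ∧ n ≤ r B ∧ f = fun i => if i ∈ B then 1 else 0} := by
  have hfin : {f : α → ℝ | ∃ B ⊆ X, B.card = n ∧ n ≤ r B ∧
      f = fun i => if i ∈ B then 1 else 0}.Finite :=
    (X.powerset.finite_toSet.image fun B i => if i ∈ B then (1 : ℝ) else 0).subset <| by
      rintro _ ⟨B, hBX, -, -, rfl⟩
      exact ⟨B, by simpa using hBX, rfl⟩
  calc basePolytope r X n
      = closure (convexHull ℝ ((basePolytope r X n).extremePoints ℝ)) :=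
        (closure_convexHull_extremePoints isCompact_basePolytope convex_basePolytope).symm
    _ ⊆ closure (convexHull ℝ {f | ∃ B ⊆ X, B.card = n ∧ n ≤ r B ∧
          f = fun i => if i ∈ B then 1 else 0}) :=
        closure_mono (convexHull_mono fun _ hy =>
          exists_eq_indicator_of_mem_extremePoints_basePolytope hr hrX hr1 hy)
    _ = _ := (hfin.isClosed_convexHull (𝕜 := ℝ)).closure_eq

end BasePolytope

theorem isSubmodular_finrank_span {K V : Type*} [DivisionRing K] [AddCommGroup V] [Module K V]
    [DecidableEq V] : IsSubmodular fun S : Finset V => (S : Set V).finrank K := by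
  intro S T
  have hinter : span K (↑(S ∩ T) : Set V) ≤ span K S ⊓ span K T :=
    le_inf (span_mono (by simp)) (span_mono (by simp))
  have := finrank_sup_add_finrank_inf_eq (span K (S : Set V)) (span K (T : Set V))
  have := Submodule.finrank_mono hinter
  beta_reduce
  unfold Set.finrank
  rw [Finset.coe_union, span_union]
  omega

theorem card_filter_mem_le_finrank {K V : Type*} [DivisionRing K] [AddCommGroup V] [Module K V]
    [FiniteDimensional K V] {B : Finset V} (hB : LinearIndependent K (Subtype.val : B → V))
    (W : Submodule K V) : (B.filter (· ∈ W)).card ≤ finrank K W := by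
  have hindep : LinearIndepOn K id (↑(B.filter (· ∈ W)) : Set V) :=
    LinearIndepOn.mono (s := (B : Set V)) hB (Finset.coe_subset.2 (Finset.filter_subset _ _))
  rw [← finrank_span_finset_eq_card hindep]
  exact Submodule.finrank_mono (span_le.2 fun x hx => by simp at hx; exact hx.2)

section LinearMatroid

variable {E : Type*} [DecidableEq E] [AddCommGroup E] [Module ℝ E] [FiniteDimensional ℝ E]

theorem sum_filter_mem_le_finrank_of_mem_convexHull {f : E → ℝ}
    (hf : f ∈ convexHull ℝ {g | ∃ B : Finset E, LinearIndependent ℝ (Subtype.val : B → E) ∧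
      g = fun x => if x ∈ B then 1 else 0})
    (X : Finset E) (V : Submodule ℝ E) : ∑ x ∈ X.filter (· ∈ V), f x ≤ finrank ℝ V := by
  have hlin : IsLinearMap ℝ fun g : E → ℝ => ∑ x ∈ X.filter (· ∈ V), g x :=
    ⟨fun g h => Finset.sum_add_distrib, fun c g => (Finset.mul_sum ..).symm⟩
  refine convexHull_min ?_ (convex_halfSpace_le hlin _) hf
  rintro _ ⟨B, hB, rfl⟩
  simp only [Set.mem_ofPred_eq, Finset.sum_boole]
  calc (((X.filter (· ∈ V)).filter (· ∈ B)).card : ℝ) ≤ (B.filter (· ∈ V)).card := by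
        exact_mod_cast Finset.card_le_card fun x hx => by simp_all
    _ ≤ finrank ℝ V := by exact_mod_cast card_filter_mem_le_finrank hB V

theorem mem_basePolytope_finrank {d : ℕ} (hE : finrank ℝ E ≤ d) {X : Finset E} {μ : E → ℝ}
    (hX0 : (0 : E) ∉ X) (hμ0 : ∀ x ∈ X, 0 ≤ μ x) (hμ1 : ∑ x ∈ X, μ x = 1)
    (hsupp : ∀ x ∉ X, μ x = 0)
    (hμV : ∀ k : ℕ, 1 ≤ k → k ≤ d → ∀ V : Submodule ℝ E, finrank ℝ V = k →
      ∑ x ∈ X.filter (· ∈ V), μ x ≤ (k : ℝ) / d) :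
    (fun x => (d : ℝ) * μ x) ∈ basePolytope (fun S => (S : Set E).finrank ℝ) X d := by
  refine ⟨fun x => ?_, fun x hx => by simp [hsupp x hx], fun S hSX => ?_, by
    rw [← Finset.mul_sum, hμ1, mul_one]⟩
  · by_cases hx : x ∈ X
    · exact mul_nonneg (Nat.cast_nonneg d) (hμ0 x hx)
    · simp [hsupp x hx]
  rcases S.eq_empty_or_nonempty with rfl | ⟨x, hxS⟩
  · simp
  set V := span ℝ (S : Set E)
  have hk1 : 1 ≤ finrank ℝ V := by
    refine Nat.one_le_iff_ne_zero.2 fun h0 => ?_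
    have hx0 : x = 0 := (span_eq_bot.1 (finrank_eq_zero.1 h0)) x hxS
    exact hX0 (hx0 ▸ hSX hxS)
  have hkd : finrank ℝ V ≤ d := (Submodule.finrank_le V).trans hE
  have hd : (0 : ℝ) < d := by exact_mod_cast hk1.trans hkd
  have hSV : S ⊆ X.filter (· ∈ V) := fun x hx => Finset.mem_filter.2 ⟨hSX hx, subset_span hx⟩
  calc ∑ x ∈ S, (d : ℝ) * μ x = d * ∑ x ∈ S, μ x := (Finset.mul_sum ..).symm
    _ ≤ d * ∑ x ∈ X.filter (· ∈ V), μ x := by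
      gcongr
      exact fun x hx _ => hμ0 x (Finset.mem_filter.1 hx).1
    _ ≤ d * (finrank ℝ V / d) := by gcongr; exact hμV _ hk1 hkd V rfl
    _ = (S : Set E).finrank ℝ := by field_simp; rfl

end LinearMatroid

theorem stmt_12_general (d : ℕ)
    (X : Finset (EuclideanSpace ℝ (Fin d))) (μ : EuclideanSpace ℝ (Fin d) → ℝ)
    (hμ0 : ∀ x ∈ X, 0 ≤ μ x) (hμ1 : ∑ x ∈ X, μ x = 1)
    (hsupp : ∀ x ∉ X, μ x = 0) (hunit : ∀ x ∈ X, ‖x‖ = 1) :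
    ((fun x => (d : ℝ) * μ x) ∈
      convexHull ℝ {f : EuclideanSpace ℝ (Fin d) → ℝ |
        ∃ B : Finset (EuclideanSpace ℝ (Fin d)), B ⊆ X ∧ B.card = d ∧
          LinearIndependent ℝ (Subtype.val : {x // x ∈ B} → EuclideanSpace ℝ (Fin d)) ∧
          f = fun x => if x ∈ B then (1 : ℝ) else 0}) ↔
    (∀ k : ℕ, 1 ≤ k → k ≤ d →
      ∀ V : Submodule ℝ (EuclideanSpace ℝ (Fin d)), Module.finrank ℝ V = k →
        ∑ x ∈ X.filter (fun x => x ∈ V), μ x ≤ (k : ℝ) / d) := by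
  constructor
  · intro h k hk1 hkd V hV
    have hd : (0 : ℝ) < d := by exact_mod_cast hk1.trans hkd
    have hsum := sum_filter_mem_le_finrank_of_mem_convexHull
      (convexHull_mono (by rintro _ ⟨B, -, -, hB, rfl⟩; exact ⟨B, hB, rfl⟩) h) X V
    rw [← Finset.mul_sum, hV] at hsum
    rwa [le_div_iff₀ hd, mul_comm]
  · intro hμV
    have hX0 : (0 : EuclideanSpace ℝ (Fin d)) ∉ X := fun h => by simpa using hunit 0 h
    have hy := mem_basePolytope_finrank finrank_euclideanSpace_fin.le hX0 hμ0 hμ1 hsupp hμV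
    have hhull := basePolytope_subset_convexHull isSubmodular_finrank_span
      ((Submodule.finrank_le _).trans finrank_euclideanSpace_fin.le)
      (fun x _ => (finrank_span_finset_le_card {x}).trans (Finset.card_singleton x).le) hy
    refine convexHull_mono ?_ hhull
    rintro _ ⟨B, hBX, hcard, hrank, rfl⟩
    exact ⟨B, hBX, hcard,
      linearIndependent_iff_card_le_finrank_span.2 (by simpa [hcard] using hrank), rfl⟩

/-- `d·μ` lies in the convex hull of indicator vectors of bases of `ℝ^d`
contained in `X` iff every `k`-dimensional subspace carries at most a `k/d` fraction of
`(X,μ)`. -/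
theorem stmt_12 (d : ℕ) (hd : 0 < d)
    (X : Finset (EuclideanSpace ℝ (Fin d))) (μ : EuclideanSpace ℝ (Fin d) → ℝ)
    (hμ0 : ∀ x ∈ X, 0 ≤ μ x) (hμ1 : ∑ x ∈ X, μ x = 1)
    (hsupp : ∀ x ∉ X, μ x = 0) (hunit : ∀ x ∈ X, ‖x‖ = 1) :
    ((fun x => (d : ℝ) * μ x) ∈
      convexHull ℝ {f : EuclideanSpace ℝ (Fin d) → ℝ |
        ∃ B : Finset (EuclideanSpace ℝ (Fin d)), B ⊆ X ∧ B.card = d ∧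
          LinearIndependent ℝ (Subtype.val : {x // x ∈ B} → EuclideanSpace ℝ (Fin d)) ∧
          f = fun x => if x ∈ B then (1 : ℝ) else 0}) ↔
    (∀ k : ℕ, 1 ≤ k → k ≤ d →
      ∀ V : Submodule ℝ (EuclideanSpace ℝ (Fin d)), Module.finrank ℝ V = k →
        ∑ x ∈ X.filter (fun x => x ∈ V), μ x ≤ (k : ℝ) / d) :=
  stmt_12_general d X μ hμ0 hμ1 hsupp hunit
end

section
/- Let X be a finite set of unit vectors in R^d with probability distribution μ, and suppose there exists an invertible linear transformation T: R^d → R^d such that (X_T, μ_T) is in isotropic position (exactly). Then for every 0 < k < d and every k-dimensional subspace V, either μ(X ∩ V) < k/d, or μ(X ∩ V) = k/d and the points of X with positive μ-mass outside V lie in a (d−k)-dimensional subspace. -/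
open scoped RealInnerProductSpace BigOperators Classical

/-!
Put `y x = T x / ‖T x‖` and `U = T V`. Summing the isotropy identity of the `y x` over an
orthonormal basis of `U` gives `∑ μ x ‖P_U (y x)‖² = dim U / d`. A point of `X ∩ V` has `y x ∈ U`,
a unit vector, so it contributes its full mass: hence `μ(X ∩ V) ≤ k / d`, and in case of equality
every other point of positive mass has `P_U (y x) = 0`, i.e. lies in `T⁻¹(Uᗮ)`, of dimension `d - k`.
-/

open Finset Module Submodule

theorem OrthonormalBasis.sum_sq_inner_eq_norm_sq_starProjection {E n : Type*}
    [NormedAddCommGroup E] [InnerProductSpace ℝ E] [Fintype n] {U : Submodule ℝ E}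
    [U.HasOrthogonalProjection] (b : OrthonormalBasis n ℝ U) (x : E) :
    ∑ i, ⟪(b i : E), x⟫ ^ 2 = ‖U.starProjection x‖ ^ 2 := by
  rw [U.starProjection_apply, norm_coe, ← b.sum_sq_inner_right]
  simp_rw [inner_orthogonalProjectionOnto_eq_of_mem_left]

section Isotropic

variable {ι E : Type*} [NormedAddCommGroup E] [InnerProductSpace ℝ E]
  {s : Finset ι} {w : ι → ℝ} {y : ι → E} {c : ℝ}

theorem sum_mul_inner_sq_normalize_eq {z : ι → E}
    (hiso : ∀ v, v ≠ 0 → ∑ i ∈ s, w i * ⟪z i, v⟫ ^ 2 / (‖z i‖ ^ 2 * ‖v‖ ^ 2) = c) (v : E) :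
    ∑ i ∈ s, w i * ⟪‖z i‖⁻¹ • z i, v⟫ ^ 2 = c * ‖v‖ ^ 2 := by
  rcases eq_or_ne v 0 with rfl | hv
  · simp
  rw [← hiso v hv, sum_mul]
  refine sum_congr rfl fun i _ => ?_
  rcases eq_or_ne (z i) 0 with hz | hz
  · simp [hz]
  have := norm_ne_zero_iff.mpr hz
  have := norm_ne_zero_iff.mpr hv
  rw [real_inner_smul_left]
  field_simp

theorem sum_mul_norm_sq_starProjection_of_isotropic
    (hiso : ∀ v, ∑ i ∈ s, w i * ⟪y i, v⟫ ^ 2 = c * ‖v‖ ^ 2)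
    (U : Submodule ℝ E) [FiniteDimensional ℝ U] :
    ∑ i ∈ s, w i * ‖U.starProjection (y i)‖ ^ 2 = c * finrank ℝ U := by
  let b := stdOrthonormalBasis ℝ U
  calc ∑ i ∈ s, w i * ‖U.starProjection (y i)‖ ^ 2
      = ∑ j, ∑ i ∈ s, w i * ⟪y i, (b j : E)⟫ ^ 2 := by
        simp_rw [← b.sum_sq_inner_eq_norm_sq_starProjection, real_inner_comm, mul_sum]
        exact sum_comm
    _ = c * finrank ℝ U := by
        have hb (j) : ‖(b j : E)‖ = 1 := b.orthonormal.1 j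
        simp [hiso, hb, mul_comm]

theorem sum_filter_mem_add_sum_filter_not_mem_of_isotropic (hy : ∀ i ∈ s, ‖y i‖ = 1)
    (hiso : ∀ v, ∑ i ∈ s, w i * ⟪y i, v⟫ ^ 2 = c * ‖v‖ ^ 2)
    (U : Submodule ℝ E) [FiniteDimensional ℝ U] :
    ∑ i ∈ s with y i ∈ U, w i + ∑ i ∈ s with y i ∉ U, w i * ‖U.starProjection (y i)‖ ^ 2 =
      c * finrank ℝ U := by
  rw [← sum_mul_norm_sq_starProjection_of_isotropic hiso U,
    ← sum_filter_add_sum_filter_not s (y · ∈ U)]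
  congr 1
  refine sum_congr rfl fun i hi => ?_
  obtain ⟨hs, hU⟩ := mem_filter.mp hi
  rw [starProjection_eq_self_iff.mpr hU, hy i hs, one_pow, mul_one]

theorem sum_filter_mem_le_of_isotropic (hw : ∀ i ∈ s, 0 ≤ w i) (hy : ∀ i ∈ s, ‖y i‖ = 1)
    (hiso : ∀ v, ∑ i ∈ s, w i * ⟪y i, v⟫ ^ 2 = c * ‖v‖ ^ 2)
    (U : Submodule ℝ E) [FiniteDimensional ℝ U] : ∑ i ∈ s with y i ∈ U, w i ≤ c * finrank ℝ U := by
  rw [← sum_filter_mem_add_sum_filter_not_mem_of_isotropic hy hiso U, le_add_iff_nonneg_right]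
  exact sum_nonneg fun i hi => mul_nonneg (hw i (mem_filter.mp hi).1) (sq_nonneg _)

theorem mem_orthogonal_of_sum_filter_mem_eq_of_isotropic (hw : ∀ i ∈ s, 0 ≤ w i)
    (hy : ∀ i ∈ s, ‖y i‖ = 1) (hiso : ∀ v, ∑ i ∈ s, w i * ⟪y i, v⟫ ^ 2 = c * ‖v‖ ^ 2)
    (U : Submodule ℝ E) [FiniteDimensional ℝ U]
    (heq : ∑ i ∈ s with y i ∈ U, w i = c * finrank ℝ U) :
    ∀ i ∈ s, 0 < w i → y i ∉ U → y i ∈ Uᗮ := by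
  intro i hs hwi hU
  have hrest := sum_filter_mem_add_sum_filter_not_mem_of_isotropic hy hiso U
  rw [heq, add_eq_left, sum_eq_zero_iff_of_nonneg fun j hj =>
    mul_nonneg (hw j (mem_filter.mp hj).1) (sq_nonneg _)] at hrest
  have := hrest i (mem_filter.mpr ⟨hs, hU⟩)
  rw [mul_eq_zero, or_iff_right hwi.ne', sq_eq_zero_iff, norm_eq_zero,
    starProjection_apply_eq_zero_iff] at this
  exact this

end Isotropic

theorem stmt_14_general (d : ℕ)
    (X : Finset (EuclideanSpace ℝ (Fin d))) (μ : EuclideanSpace ℝ (Fin d) → ℝ)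
    (hμ0 : ∀ x ∈ X, 0 ≤ μ x) (hunit : ∀ x ∈ X, ‖x‖ = 1)
    (T : EuclideanSpace ℝ (Fin d) ≃ₗ[ℝ] EuclideanSpace ℝ (Fin d))
    (hiso : ∀ v : EuclideanSpace ℝ (Fin d), v ≠ 0 →
      ∑ x ∈ X, μ x * ⟪T x, v⟫ ^ 2 / (‖T x‖ ^ 2 * ‖v‖ ^ 2) = 1 / d) :
    ∀ k : ℕ, 0 < k → k < d →
      ∀ V : Submodule ℝ (EuclideanSpace ℝ (Fin d)), Module.finrank ℝ V = k →
        (∑ x ∈ X.filter (fun x => x ∈ V), μ x < (k : ℝ) / d) ∨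
        ((∑ x ∈ X.filter (fun x => x ∈ V), μ x = (k : ℝ) / d) ∧
          ∃ W : Submodule ℝ (EuclideanSpace ℝ (Fin d)), Module.finrank ℝ W = d - k ∧
            ∀ x ∈ X, 0 < μ x → x ∉ V → x ∈ W) := by
  intro k _ _ V hV
  set y := fun x => ‖T x‖⁻¹ • T x
  have hTx : ∀ x ∈ X, T x ≠ 0 := fun x hx =>
    T.map_ne_zero_iff.mpr (norm_ne_zero_iff.mp (by simp [hunit x hx]))
  have hy : ∀ x ∈ X, ‖y x‖ = 1 := fun x hx => norm_smul_inv_norm (hTx x hx)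
  have hyiso := sum_mul_inner_sq_normalize_eq hiso
  have hmem : ∀ x ∈ X, ∀ U : Submodule ℝ (EuclideanSpace ℝ (Fin d)), y x ∈ U ↔ T x ∈ U :=
    fun x hx U => smul_mem_iff U (inv_ne_zero (norm_ne_zero_iff.mpr (hTx x hx)))
  set V' := V.map (T : EuclideanSpace ℝ (Fin d) →ₗ[ℝ] EuclideanSpace ℝ (Fin d))
  have hrank : finrank ℝ V' = k := by rw [LinearEquiv.finrank_map_eq, hV]
  have hmemV : ∀ x ∈ X, y x ∈ V' ↔ x ∈ V := fun x hx => by rw [hmem x hx]; simp [V']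
  have hfilter : X.filter (fun x => y x ∈ V') = X.filter (· ∈ V) := filter_congr hmemV
  rcases (sum_filter_mem_le_of_isotropic hμ0 hy hyiso V').lt_or_eq with hlt | heq
  · left
    simpa [hfilter, hrank, div_eq_inv_mul] using hlt
  · right
    refine ⟨by simpa [hfilter, hrank, div_eq_inv_mul] using heq,
      V'ᗮ.map (T.symm : EuclideanSpace ℝ (Fin d) →ₗ[ℝ] EuclideanSpace ℝ (Fin d)), ?_,
      fun x hx hμx hxV => ?_⟩
    · have := V'.finrank_add_finrank_orthogonal
      rw [hrank, finrank_euclideanSpace_fin] at this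
      rw [LinearEquiv.finrank_map_eq]
      omega
    · have := mem_orthogonal_of_sum_filter_mem_eq_of_isotropic hμ0 hy hyiso V' heq x hx hμx
        ((hmemV x hx).not.mpr hxV)
      simpa [hmem x hx] using this

/-- If `(X,μ)` can be put into exact isotropic position by some invertible
linear transformation, then every `k`-dimensional subspace `V` (`0 < k < d`) satisfies
either `μ(X∩V) < k/d`, or `μ(X∩V) = k/d` with the positive-mass points outside `V`
contained in a `(d−k)`-dimensional subspace. -/
theorem stmt_14 (d : ℕ) (hd : 0 < d)
    (X : Finset (EuclideanSpace ℝ (Fin d))) (μ : EuclideanSpace ℝ (Fin d) → ℝ)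
    (hμ0 : ∀ x ∈ X, 0 ≤ μ x) (hμ1 : ∑ x ∈ X, μ x = 1) (hunit : ∀ x ∈ X, ‖x‖ = 1)
    (T : EuclideanSpace ℝ (Fin d) ≃ₗ[ℝ] EuclideanSpace ℝ (Fin d))
    (hiso : ∀ v : EuclideanSpace ℝ (Fin d), v ≠ 0 →
      ∑ x ∈ X, μ x * ⟪T x, v⟫ ^ 2 / (‖T x‖ ^ 2 * ‖v‖ ^ 2) = 1 / d) :
    ∀ k : ℕ, 0 < k → k < d →
      ∀ V : Submodule ℝ (EuclideanSpace ℝ (Fin d)), Module.finrank ℝ V = k →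
        (∑ x ∈ X.filter (fun x => x ∈ V), μ x < (k : ℝ) / d) ∨
        ((∑ x ∈ X.filter (fun x => x ∈ V), μ x = (k : ℝ) / d) ∧
          ∃ W : Submodule ℝ (EuclideanSpace ℝ (Fin d)), Module.finrank ℝ W = d - k ∧
            ∀ x ∈ X, 0 < μ x → x ∉ V → x ∈ W) :=
  stmt_14_general d X μ hμ0 hunit T hiso
end

section
/- Let h ∈ R^d be a unit vector, x_ref ∈ R^d with ⟨x_ref,h⟩ ≠ 0, and let w_1,…,w_e, v_1,…,v_{d−e} be an orthonormal basis of R^d such that |⟨v_i,h⟩| ≤ t/(3d) for all i, where t = |⟨x_ref,h⟩|/(λ√(10d)) for some λ ≥ 1. Let y be a unit vector with coordinates y = Σ α_i v_i + Σ β_i w_i, and suppose real numbers γ_i satisfy ⟨w_i,h⟩ = ⟨x_ref,h⟩(γ_i + δ_i) with |δ_i| ≤ 1/(3√10 λ d^{3/2}) for all i. If |Σ_i β_i γ_i| ≥ 2/(3λ√(10d)), then sign(⟨y,h⟩) = sign(⟨x_ref,h⟩)·sign(Σ_i β_i γ_i). -/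
open scoped RealInnerProductSpace BigOperators

lemma sign_eq_of_abs_sub_lt {a b : ℝ} (h : |a - b| < |b|) :
    Real.sign a = Real.sign b := by
  have hb : b ≠ 0 := by
    intro h0; rw [h0] at h; simp at h; exact absurd h (abs_nonneg a).not_gt
  rcases hb.lt_or_gt with hb' | hb'
  · have ha : a < 0 := by
      have := le_abs_self (a - b); have := abs_of_neg hb'; linarith
    rw [Real.sign_of_neg ha, Real.sign_of_neg hb']
  · have ha : 0 < a := by
      have := neg_abs_le (a - b); have := abs_of_pos hb'; linarith
    rw [Real.sign_of_pos ha, Real.sign_of_pos hb']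

lemma sign_mul' {x y : ℝ} (hx : x ≠ 0) (hy : y ≠ 0) :
    Real.sign (x * y) = Real.sign x * Real.sign y := by
  rcases hx.lt_or_gt with h | h <;> rcases hy.lt_or_gt with h' | h'
  · rw [Real.sign_of_pos (mul_pos_of_neg_of_neg h h'), Real.sign_of_neg h,
      Real.sign_of_neg h']; ring
  · rw [Real.sign_of_neg (mul_neg_of_neg_of_pos h h'), Real.sign_of_neg h,
      Real.sign_of_pos h']; ring
  · rw [Real.sign_of_neg (mul_neg_of_pos_of_neg h h'), Real.sign_of_pos h,
      Real.sign_of_neg h']; ring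
  · rw [Real.sign_of_pos (mul_pos h h'), Real.sign_of_pos h,
      Real.sign_of_pos h']; ring

/-- sign inference. With an orthonormal basis `v₁,…,v_{d−e}, w₁,…,w_e`
where the `v_i` have margin at most `t/(3d)` for `t = |⟪x_ref,h⟫|/(λ√(10d))`, and
approximate relative margins `γ_i` of the `w_i` (error `δ_i` at most
`1/(3√10·λ·d^{3/2})`), any unit vector `y = Σα_i v_i + Σβ_i w_i` with
`|Σβ_iγ_i| ≥ 2/(3λ√(10d))` satisfies
`sign⟪y,h⟫ = sign⟪x_ref,h⟫ · sign(Σβ_iγ_i)`. -/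
theorem stmt_15 (d e : ℕ) (hd : 0 < d) (he : e ≤ d)
    (h y xref : EuclideanSpace ℝ (Fin d)) (hh : ‖h‖ = 1) (hy1 : ‖y‖ = 1)
    (hxref : ⟪xref, h⟫ ≠ 0) (lam : ℝ) (hlam : 1 ≤ lam)
    (v : Fin (d - e) → EuclideanSpace ℝ (Fin d))
    (w : Fin e → EuclideanSpace ℝ (Fin d))
    (horth : Orthonormal ℝ (Sum.elim v w))
    (α : Fin (d - e) → ℝ) (β : Fin e → ℝ)
    (hy : y = ∑ i, α i • v i + ∑ i, β i • w i)
    (hv : ∀ i, |⟪v i, h⟫| ≤ (|⟪xref, h⟫| / (lam * Real.sqrt (10 * d))) / (3 * d))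
    (γ δ : Fin e → ℝ)
    (hw : ∀ i, ⟪w i, h⟫ = ⟪xref, h⟫ * (γ i + δ i))
    (hδ : ∀ i, |δ i| ≤ 1 / (3 * Real.sqrt 10 * lam * (d * Real.sqrt d)))
    (hbig : 2 / (3 * lam * Real.sqrt (10 * d)) ≤ |∑ i, β i * γ i|) :
    Real.sign ⟪y, h⟫ = Real.sign ⟪xref, h⟫ * Real.sign (∑ i, β i * γ i) := by
  have hd1 : (1 : ℝ) ≤ (d : ℝ) := by exact_mod_cast hd
  have hlam0 : (0 : ℝ) < lam := by linarith
  have hsd : (0 : ℝ) < Real.sqrt d := Real.sqrt_pos.mpr (by linarith)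
  have hs10 : (0 : ℝ) < Real.sqrt 10 := Real.sqrt_pos.mpr (by norm_num)
  have hs : Real.sqrt (10 * d) = Real.sqrt 10 * Real.sqrt d :=
    Real.sqrt_mul (by norm_num) _
  have hspos : (0 : ℝ) < Real.sqrt (10 * d) := by rw [hs]; positivity
  set X := |⟪xref, h⟫| with hXdef
  have hX : 0 < X := abs_pos.mpr hxref
  set G := ∑ i, β i * γ i with hGdef
  set c : ℝ := 1 / (3 * lam * Real.sqrt (10 * d)) with hcdef
  have hc : 0 < c := by positivity
  have hbig' : 2 * c ≤ |G| := by
    rw [hcdef]; rw [show 2 * (1 / (3 * lam * Real.sqrt (10 * d)))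
      = 2 / (3 * lam * Real.sqrt (10 * d)) by ring]; exact hbig
  -- e ≥ 1
  have he1 : 1 ≤ e := by
    rcases Nat.eq_zero_or_pos e with rfl | h'
    · exfalso
      have hG0 : G = 0 := by simp [hGdef]
      rw [hG0] at hbig'; simp at hbig'; linarith
    · exact h'
  -- coefficient bounds
  have hcoef : ∀ j : Fin (d - e) ⊕ Fin e, |Sum.elim α β j| ≤ 1 := by
    intro j
    have hy' : y = ∑ j : Fin (d - e) ⊕ Fin e,
        Sum.elim α β j • Sum.elim v w j := by
      rw [hy, Fintype.sum_sum_type]; simp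
    have h1 : ⟪Sum.elim v w j, y⟫ = Sum.elim α β j := by
      rw [hy']; exact horth.inner_right_fintype _ j
    have h2 : |⟪Sum.elim v w j, y⟫| ≤ ‖Sum.elim v w j‖ * ‖y‖ :=
      abs_real_inner_le_norm _ _
    rw [h1, horth.1 j, hy1] at h2; simpa using h2
  have hα : ∀ i, |α i| ≤ 1 := fun i => hcoef (Sum.inl i)
  have hβ : ∀ i, |β i| ≤ 1 := fun i => hcoef (Sum.inr i)
  -- inner product expansion
  set A : ℝ := ∑ i, α i * ⟪v i, h⟫ with hAdef
  set D : ℝ := ∑ i, β i * δ i with hDdef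
  have hyh : ⟪y, h⟫ = A + (⟪xref, h⟫ * G + ⟪xref, h⟫ * D) := by
    rw [hy, inner_add_left, sum_inner, sum_inner]
    simp only [real_inner_smul_left]
    congr 1
    rw [hGdef, hDdef, Finset.mul_sum, Finset.mul_sum, ← Finset.sum_add_distrib]
    apply Finset.sum_congr rfl
    intro i _
    rw [hw i]; ring
  -- bound on A
  have hA : |A| ≤ ((d : ℝ) - 1) * (X * c / d) := by
    calc |A| ≤ ∑ i, |α i * ⟪v i, h⟫| := Finset.abs_sum_le_sum_abs _ _
    _ ≤ ∑ _i : Fin (d - e), X * c / d := by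
        apply Finset.sum_le_sum
        intro i _
        rw [abs_mul]
        have h1 := hv i
        have h2 : (X / (lam * Real.sqrt (10 * d))) / (3 * d) = X * c / d := by
          rw [hcdef, div_div, mul_one_div, div_div]; ring_nf
        calc |α i| * |⟪v i, h⟫| ≤ 1 * (X / (lam * Real.sqrt (10 * d)) / (3 * d)) := by
              apply mul_le_mul (hα i) h1 (abs_nonneg _) zero_le_one
        _ = X * c / d := by rw [one_mul, h2]
    _ = ((d - e : ℕ) : ℝ) * (X * c / d) := by
        rw [Finset.sum_const, Finset.card_univ, Fintype.card_fin, nsmul_eq_mul]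
    _ ≤ ((d : ℝ) - 1) * (X * c / d) := by
        apply mul_le_mul_of_nonneg_right _ (by positivity)
        have : d - e ≤ d - 1 := Nat.sub_le_sub_left he1 d
        have h3 : ((d - e : ℕ) : ℝ) ≤ ((d - 1 : ℕ) : ℝ) := by exact_mod_cast this
        have h4 : ((d - 1 : ℕ) : ℝ) = (d : ℝ) - 1 := by
          rw [Nat.cast_sub hd]; norm_num
        linarith
  have hAlt : |A| < X * c := by
    have h1 : ((d : ℝ) - 1) * (X * c / d) < X * c := by
      rw [div_eq_mul_inv]
      have hdpos : (0 : ℝ) < d := by linarith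
      rw [show ((d:ℝ) - 1) * (X * c * (d:ℝ)⁻¹) = X * c * (((d:ℝ) - 1) / d) by
        rw [div_eq_mul_inv]; ring]
      have : ((d : ℝ) - 1) / d < 1 := by
        rw [div_lt_one hdpos]; linarith
      nlinarith [mul_pos hX hc]
    linarith
  -- bound on D
  have hD : |D| ≤ c := by
    calc |D| ≤ ∑ i, |β i * δ i| := Finset.abs_sum_le_sum_abs _ _
    _ ≤ ∑ _i : Fin e, 1 / (3 * Real.sqrt 10 * lam * (d * Real.sqrt d)) := by
        apply Finset.sum_le_sum
        intro i _
        rw [abs_mul]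
        calc |β i| * |δ i| ≤ 1 * (1 / (3 * Real.sqrt 10 * lam * (d * Real.sqrt d))) :=
            mul_le_mul (hβ i) (hδ i) (abs_nonneg _) zero_le_one
        _ = _ := one_mul _
    _ = (e : ℝ) * (1 / (3 * Real.sqrt 10 * lam * (d * Real.sqrt d))) := by
        rw [Finset.sum_const, Finset.card_univ, Fintype.card_fin, nsmul_eq_mul]
    _ ≤ (d : ℝ) * (1 / (3 * Real.sqrt 10 * lam * (d * Real.sqrt d))) := by
        apply mul_le_mul_of_nonneg_right _ (by positivity)
        exact_mod_cast he
    _ = c := by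
        rw [hcdef, hs, mul_one_div, div_eq_div_iff (by positivity) (by positivity)]
        ring
  -- main inequality
  have hkey : |⟪y, h⟫ - ⟪xref, h⟫ * G| < |⟪xref, h⟫ * G| := by
    have h1 : ⟪y, h⟫ - ⟪xref, h⟫ * G = A + ⟪xref, h⟫ * D := by
      rw [hyh]; ring
    rw [h1]
    have h2 : |A + ⟪xref, h⟫ * D| ≤ |A| + X * |D| := by
      calc |A + ⟪xref, h⟫ * D| ≤ |A| + |⟪xref, h⟫ * D| := abs_add_le _ _
      _ = |A| + X * |D| := by rw [abs_mul]
    have h3 : |⟪xref, h⟫ * G| = X * |G| := by rw [abs_mul]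
    rw [h3]
    have h4 : X * |D| ≤ X * c := mul_le_mul_of_nonneg_left hD hX.le
    have h5 : X * (2 * c) ≤ X * |G| := mul_le_mul_of_nonneg_left hbig' hX.le
    nlinarith
  have hG0 : G ≠ 0 := by
    intro h0; rw [h0] at hbig'; simp at hbig'; linarith
  rw [sign_eq_of_abs_sub_lt hkey, sign_mul' hxref hG0]
end

section
/- Under the assumptions of the previous inference setup, if additionally |Σ_i β_i γ_i| ≥ 2/(3λ√(10d)), then the relative margin is approximated within a factor of 2: (1/2)|Σ_i β_i γ_i| ≤ |⟨y,h⟩/⟨x_ref,h⟩| ≤ 2|Σ_i β_i γ_i|. -/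
open scoped RealInnerProductSpace BigOperators

/-!
Write `ε = 1/(3λ√(10d))`. Dividing `⟪y,h⟫ = Σ αᵢ⟪vᵢ,h⟫ + Σ βᵢ⟪wᵢ,h⟫` by `⟪x_ref,h⟫` gives
`Σ βᵢγᵢ + E`, where `E` pairs the coordinates `(α, β)` of `y` with the error terms
`(⟪vᵢ,h⟫/⟪x_ref,h⟫, δ)`. The coordinates form a unit vector since the basis is orthonormal, and
each error term is at most `ε/d`, so by Cauchy–Schwarz `|E| ≤ √d · ε/d ≤ ε ≤ |Σ βᵢγᵢ|/2`.
-/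

theorem Orthonormal.sum_sq_coeff_eq_one {E ι : Type*} [NormedAddCommGroup E] [InnerProductSpace ℝ E]
    [Fintype ι] {b : ι → E} (hb : Orthonormal ℝ b) {a : ι → ℝ} (ha : ‖∑ i, a i • b i‖ = 1) :
    ∑ i, a i ^ 2 = 1 := by
  have := hb.inner_sum a a Finset.univ
  simp only [real_inner_self_eq_norm_sq, ha, conj_trivial] at this
  simpa [sq] using this.symm

theorem abs_sum_mul_le_sqrt_card_mul {ι : Type*} [Fintype ι] {a c : ι → ℝ} {M : ℝ}
    (ha : ∑ i, a i ^ 2 ≤ 1) (hc : ∀ i, |c i| ≤ M) :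
    |∑ i, a i * c i| ≤ √(Fintype.card ι) * M := by
  rcases isEmpty_or_nonempty ι with hι | ⟨⟨i₀⟩⟩
  · simp
  have hM : 0 ≤ M := (abs_nonneg _).trans (hc i₀)
  have hc2 : ∑ i, c i ^ 2 ≤ Fintype.card ι * M ^ 2 := by
    calc ∑ i, c i ^ 2 ≤ ∑ _i : ι, M ^ 2 :=
          Finset.sum_le_sum fun i _ => sq_le_sq' (abs_le.mp (hc i)).1 (abs_le.mp (hc i)).2
      _ = Fintype.card ι * M ^ 2 := by simp
  calc |∑ i, a i * c i| ≤ √(Fintype.card ι * M ^ 2) := by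
        refine Real.abs_le_sqrt ((Finset.sum_mul_sq_le_sq_mul_sq _ a c).trans ?_)
        nlinarith [Finset.sum_nonneg fun i (_ : i ∈ Finset.univ) => sq_nonneg (c i)]
    _ = √(Fintype.card ι) * M := by rw [Real.sqrt_mul (Nat.cast_nonneg _), Real.sqrt_sq hM]

theorem half_abs_le_abs_add_of_abs_le_half {S E : ℝ} (h : |E| ≤ |S| / 2) :
    (1 / 2) * |S| ≤ |S + E| ∧ |S + E| ≤ 2 * |S| := by
  have h₁ := abs_add_le S E
  have h₂ := abs_sub_abs_le_abs_sub S (-E)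
  rw [sub_neg_eq_add, abs_neg] at h₂
  constructor <;> linarith

theorem inner_sum_add_sum_div_eq {E ι κ : Type*} [NormedAddCommGroup E] [InnerProductSpace ℝ E]
    [Fintype ι] [Fintype κ] (v : ι → E) (w : κ → E) (α : ι → ℝ) (β γ δ : κ → ℝ) {h : E} {x : ℝ}
    (hx : x ≠ 0) (hw : ∀ i, ⟪w i, h⟫ = x * (γ i + δ i)) :
    ⟪∑ i, α i • v i + ∑ i, β i • w i, h⟫ / x =
      ∑ i, β i * γ i + ∑ i, Sum.elim α β i * Sum.elim (fun i => ⟪v i, h⟫ / x) δ i := by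
  have hβw : ∀ i, β i * ⟪w i, h⟫ / x = β i * γ i + β i * δ i := fun i => by
    rw [hw, mul_div_assoc, mul_div_cancel_left₀ _ hx, mul_add]
  simp only [inner_add_left, sum_inner, real_inner_smul_left, add_div, Finset.sum_div, hβw,
    Finset.sum_add_distrib, Fintype.sum_sum_type, Sum.elim_inl, Sum.elim_inr, mul_div_assoc]
  ring

theorem stmt_16_general (d e : ℕ) (hd : 0 < d) (he : e ≤ d)
    (h y xref : EuclideanSpace ℝ (Fin d)) (hy1 : ‖y‖ = 1)
    (hxref : ⟪xref, h⟫ ≠ 0) (lam : ℝ) (hlam : 1 ≤ lam)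
    (v : Fin (d - e) → EuclideanSpace ℝ (Fin d))
    (w : Fin e → EuclideanSpace ℝ (Fin d))
    (horth : Orthonormal ℝ (Sum.elim v w))
    (α : Fin (d - e) → ℝ) (β : Fin e → ℝ)
    (hy : y = ∑ i, α i • v i + ∑ i, β i • w i)
    (hv : ∀ i, |⟪v i, h⟫| ≤ (|⟪xref, h⟫| / (lam * Real.sqrt (10 * d))) / (3 * d))
    (γ δ : Fin e → ℝ)
    (hw : ∀ i, ⟪w i, h⟫ = ⟪xref, h⟫ * (γ i + δ i))
    (hδ : ∀ i, |δ i| ≤ 1 / (3 * Real.sqrt 10 * lam * (d * Real.sqrt d)))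
    (hbig : 2 / (3 * lam * Real.sqrt (10 * d)) ≤ |∑ i, β i * γ i|) :
    (1 / 2) * |∑ i, β i * γ i| ≤ |⟪y, h⟫ / ⟪xref, h⟫| ∧
    |⟪y, h⟫ / ⟪xref, h⟫| ≤ 2 * |∑ i, β i * γ i| := by
  set ε := 1 / (3 * lam * √(10 * d)) with hε
  have hd1 : (1 : ℝ) ≤ d := by exact_mod_cast hd
  have hε0 : 0 < ε := by have := hlam.trans_lt' one_pos; positivity
  have hcoeff : ∑ i, Sum.elim α β i ^ 2 = 1 :=
    horth.sum_sq_coeff_eq_one (by simpa [Fintype.sum_sum_type, ← hy] using hy1)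
  have hc : ∀ i, |Sum.elim (fun i => ⟪v i, h⟫ / ⟪xref, h⟫) δ i| ≤ ε / d := by
    rintro (i | i)
    · rw [Sum.elim_inl, abs_div, div_le_iff₀ (abs_pos.mpr hxref)]
      refine (hv i).trans_eq ?_
      rw [hε]; field_simp
    · rw [Sum.elim_inr]
      refine (hδ i).trans_eq ?_
      rw [hε, Real.sqrt_mul (by norm_num)]; field_simp
  have hcard : Fintype.card (Fin (d - e) ⊕ Fin e) = d := by simp [Nat.sub_add_cancel he]
  have herr : |∑ i, Sum.elim α β i * Sum.elim (fun i => ⟪v i, h⟫ / ⟪xref, h⟫) δ i| ≤ ε :=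
    calc _ ≤ √d * (ε / d) := 
          (abs_sum_mul_le_sqrt_card_mul hcoeff.le hc).trans_eq (by rw [hcard])
      _ ≤ d * (ε / d) := by gcongr; exact Real.sqrt_le_self_iff.mpr (Or.inr hd1)
      _ = ε := mul_div_cancel₀ ε (by positivity)
  have hbig' : 2 * ε ≤ |∑ i, β i * γ i| := by rwa [hε, mul_one_div]
  rw [hy, inner_sum_add_sum_div_eq v w α β γ δ hxref hw]
  exact half_abs_le_abs_add_of_abs_le_half (by linarith)

/-- under the same inference setup with `|Σβ_iγ_i| ≥ 2/(3λ√(10d))`,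
the relative margin `⟪y,h⟫/⟪x_ref,h⟫` is approximated by `Σβ_iγ_i` within a factor of 2. -/
theorem stmt_16 (d e : ℕ) (hd : 0 < d) (he : e ≤ d)
    (h y xref : EuclideanSpace ℝ (Fin d)) (hh : ‖h‖ = 1) (hy1 : ‖y‖ = 1)
    (hxref : ⟪xref, h⟫ ≠ 0) (lam : ℝ) (hlam : 1 ≤ lam)
    (v : Fin (d - e) → EuclideanSpace ℝ (Fin d))
    (w : Fin e → EuclideanSpace ℝ (Fin d))
    (horth : Orthonormal ℝ (Sum.elim v w))
    (α : Fin (d - e) → ℝ) (β : Fin e → ℝ)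
    (hy : y = ∑ i, α i • v i + ∑ i, β i • w i)
    (hv : ∀ i, |⟪v i, h⟫| ≤ (|⟪xref, h⟫| / (lam * Real.sqrt (10 * d))) / (3 * d))
    (γ δ : Fin e → ℝ)
    (hw : ∀ i, ⟪w i, h⟫ = ⟪xref, h⟫ * (γ i + δ i))
    (hδ : ∀ i, |δ i| ≤ 1 / (3 * Real.sqrt 10 * lam * (d * Real.sqrt d)))
    (hbig : 2 / (3 * lam * Real.sqrt (10 * d)) ≤ |∑ i, β i * γ i|) :
    (1 / 2) * |∑ i, β i * γ i| ≤ |⟪y, h⟫ / ⟪xref, h⟫| ∧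
    |⟪y, h⟫ / ⟪xref, h⟫| ≤ 2 * |∑ i, β i * γ i| :=
  stmt_16_general d e hd he h y xref hy1 hxref lam hlam v w horth α β hy hv γ δ hw hδ hbig
end

section
/- Define β(m) = 2^{√(log m · log log m)} and suppose V: N → R≥0 satisfies V(m) ≤ C₅ log(m)β(m)m + C₆ log(m)β(m)·V(m/β(m)) for all m above a constant, with V bounded on a constant-size base case. Then V(m) ≤ C·m·2^{5√(log m · log log m)} for some constant C (for all sufficiently large m). -/
/-!
Write `L = log m`, `l = log log m` and `s = log β(m) = √(L l)`, so that `l ≤ s ≤ L` once `L ≥ 1`.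
Since `√(L - s) ≤ √L - s / (2√L)`, the exponent drops by at least `l / 2` on passing from `m` to
`m' = ⌊m / β(m)⌋`: `s(m') ≤ √((L - s) l) ≤ s - l / 2`. Hence the inductive bound for `V(m')` gains a
factor `2^(-5l/2) = L^(-5/2)`, which absorbs the factor `C₆ L` of the recurrence once `L ≥ 2 C₆`,
while the inhomogeneous term `C₅ L β(m) m = C₅ 2^(l + s) m` is at most `C₅ 2^(5s) m`.
-/

open Real Filter Finset

namespace Real

theorem sqrt_sub_le_sqrt_sub_div {a t : ℝ} (ht : 0 ≤ t) (hta : t ≤ a) :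
    √(a - t) ≤ √a - t / (2 * √a) := by
  rcases (ht.trans hta).eq_or_lt with rfl | ha
  · simp [le_antisymm hta ht]
  have hr : 0 < √a := sqrt_pos.2 ha
  have hsq : √a ^ 2 = a := sq_sqrt ha.le
  rw [sqrt_le_iff]
  constructor
  · rw [sub_nonneg, div_le_iff₀ (by positivity)]
    nlinarith
  · have : (√a - t / (2 * √a)) ^ 2 = a - t + (t / (2 * √a)) ^ 2 := by
      field_simp
      rw [hsq]
      ring
    rw [this]
    nlinarith [sq_nonneg (t / (2 * √a))]

theorem logb_two_le_self {x : ℝ} (hx : 0 < x) : logb 2 x ≤ x := by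
  rcases lt_or_ge x 1 with h | h
  · exact (logb_neg one_lt_two hx h).le.trans hx.le
  · rw [logb_le_iff_le_rpow one_lt_two hx]
    have := one_add_mul_self_le_rpow_one_add (s := 1) (by norm_num) h
    norm_num at this
    linarith

theorem sqrt_mul_logb_le {b x y z : ℝ} (hb : 1 < b) (hx : 0 ≤ x) (hxy : x ≤ y) (hyz : y ≤ z) :
    √(x * logb b x) ≤ √(y * logb b z) := by
  rcases le_or_gt (x * logb b x) 0 with h | h
  · rw [sqrt_eq_zero'.2 h]
    exact sqrt_nonneg _
  obtain ⟨hx₀, hlx⟩ := (pos_and_pos_or_neg_and_neg_of_mul_pos h).resolve_right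
    fun h' => h'.1.not_ge hx
  exact sqrt_le_sqrt
    (mul_le_mul hxy (logb_le_logb_of_le hb hx₀ (hxy.trans hyz)) hlx.le (hx.trans hxy))

end Real

/-- `log β(x)` in the paper's notation. -/
noncomputable def logBeta (x : ℝ) : ℝ := √(logb 2 x * logb 2 (logb 2 x))

section LogBeta

variable {x : ℝ}

theorem one_le_logb_logb (hL : 2 ≤ logb 2 x) : 1 ≤ logb 2 (logb 2 x) := by
  rw [le_logb_iff_rpow_le one_lt_two (by linarith)]
  simpa using hL

theorem logBeta_le_logb (hL : 1 ≤ logb 2 x) : logBeta x ≤ logb 2 x := by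
  have hlL := logb_two_le_self (x := logb 2 x) (by linarith)
  rw [logBeta, sqrt_le_left (by linarith)]
  nlinarith

theorem logb_logb_le_logBeta (hL : 1 ≤ logb 2 x) : logb 2 (logb 2 x) ≤ logBeta x := by
  have hlL := logb_two_le_self (x := logb 2 x) (by linarith)
  have hl₀ := logb_nonneg one_lt_two hL
  rw [logBeta, le_sqrt hl₀ (mul_nonneg (by linarith) hl₀)]
  nlinarith

theorem logBeta_le_logBeta_sub (hx : 0 < x) (hL : 1 ≤ logb 2 x) {y : ℝ} (hy : 1 ≤ y)
    (hyx : y ≤ x / 2 ^ logBeta x) :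
    logBeta y ≤ logBeta x - logb 2 (logb 2 x) / 2 := by
  set L := logb 2 x
  set l := logb 2 L
  set s := logBeta x
  have hsL : s ≤ L := logBeta_le_logb hL
  have hs₀ : 0 ≤ s := sqrt_nonneg _
  have hl₀ : 0 ≤ l := logb_nonneg one_lt_two hL
  have hlogy : logb 2 y ≤ L - s := by
    calc logb 2 y ≤ logb 2 (x / 2 ^ s) := logb_le_logb_of_le one_lt_two (by linarith) hyx
      _ = L - s := by rw [logb_div hx.ne' (by positivity), logb_rpow two_pos (by norm_num)]
  have hs : s = √L * √l := sqrt_mul (by linarith) l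
  calc logBeta y ≤ √((L - s) * l) :=
        sqrt_mul_logb_le one_lt_two (logb_nonneg one_lt_two hy) hlogy (by linarith)
    _ = √(L - s) * √l := sqrt_mul (by linarith) l
    _ ≤ (√L - s / (2 * √L)) * √l := by gcongr; exact sqrt_sub_le_sqrt_sub_div hs₀ hsL
    _ = s - l / 2 := by
      rw [hs]
      field_simp
      linear_combination (-1 : ℝ) * sq_sqrt hl₀

end LogBeta

theorem one_le_floor_div_and_floor_div_lt {m : ℕ} (hL : 2 ≤ logb 2 m) :
    1 ≤ ⌊(m : ℝ) / 2 ^ logBeta m⌋₊ ∧ ⌊(m : ℝ) / 2 ^ logBeta m⌋₊ < m := by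
  have hm : (0 : ℝ) < m := Nat.cast_pos.2 (Nat.pos_of_ne_zero fun h => by norm_num [h] at hL)
  have hs₁ : 1 ≤ logBeta m := (one_le_logb_logb hL).trans (logb_logb_le_logBeta (by linarith))
  have hβ₁ : 1 < (2 : ℝ) ^ logBeta m := one_lt_rpow one_lt_two (by linarith)
  have hβm : (2 : ℝ) ^ logBeta m ≤ m := by
    calc (2 : ℝ) ^ logBeta m ≤ 2 ^ logb 2 m :=
          rpow_le_rpow_of_exponent_le one_le_two (logBeta_le_logb (by linarith))
      _ = m := rpow_logb two_pos (by norm_num) hm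
  constructor
  · rw [Nat.one_le_floor_iff, one_le_div (by positivity)]
    exact hβm
  · exact (Nat.floor_lt (by positivity)).2 (div_lt_self hm hβ₁)

theorem le_of_recurrence_step {C C₅ C₆ x y v w : ℝ} (hC₅ : 0 ≤ C₅) (hC₆ : 0 ≤ C₆)
    (hC : 2 * C₅ ≤ C) (hx : 0 < x) (hL : 1 ≤ logb 2 x) (hC₆L : 2 * C₆ ≤ logb 2 x)
    (hy : 1 ≤ y) (hyx : y ≤ x / 2 ^ logBeta x) (hv : v ≤ C * y * 2 ^ (5 * logBeta y))
    (hw : w ≤ C₅ * logb 2 x * 2 ^ logBeta x * x + C₆ * logb 2 x * 2 ^ logBeta x * v) :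
    w ≤ C * x * 2 ^ (5 * logBeta x) := by
  set L := logb 2 x
  set l := logb 2 L
  set s := logBeta x
  have hl₀ : 0 ≤ l := logb_nonneg one_lt_two hL
  have hls : l ≤ s := logb_logb_le_logBeta hL
  have h2l : (2 : ℝ) ^ l = L := rpow_logb two_pos (by norm_num) (by linarith)
  have hC₀ : 0 ≤ C := by linarith
  have hinhom : C₅ * L * 2 ^ s * x ≤ C / 2 * x * 2 ^ (5 * s) := by
    calc C₅ * L * 2 ^ s * x = C₅ * x * 2 ^ (l + s) := by rw [rpow_add two_pos, h2l]; ring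
      _ ≤ C / 2 * x * 2 ^ (5 * s) := by
        gcongr
        · linarith
        · norm_num
        · linarith [sqrt_nonneg (L * l)]
  have hC₆L' : 2 * C₆ * L ≤ 2 ^ (5 / 2 * l) := by
    calc 2 * C₆ * L ≤ 2 ^ l * 2 ^ l := by rw [h2l]; gcongr
      _ ≤ 2 ^ l * 2 ^ (3 / 2 * l) := by gcongr <;> [norm_num; linarith]
      _ = 2 ^ (5 / 2 * l) := by rw [← rpow_add two_pos]; ring_nf
  have hhom : C₆ * L * 2 ^ s * v ≤ C / 2 * x * 2 ^ (5 * s) := by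
    calc C₆ * L * 2 ^ s * v ≤ C₆ * L * 2 ^ s * (C * (x / 2 ^ s) * 2 ^ (5 * s - 5 / 2 * l)) := by
          refine mul_le_mul_of_nonneg_left (hv.trans ?_) (by positivity)
          gcongr
          · norm_num
          · linarith [logBeta_le_logBeta_sub hx hL hy hyx]
      _ = 2 * C₆ * L / 2 ^ (5 / 2 * l) * (C / 2 * x * 2 ^ (5 * s)) := by
          rw [rpow_sub two_pos]
          field_simp
      _ ≤ C / 2 * x * 2 ^ (5 * s) := by
          refine mul_le_of_le_one_left (by positivity) ?_
          rw [div_le_one (by positivity)]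
          exact hC₆L'
  linarith

theorem le_mul_two_rpow_logBeta {C v x : ℝ} (hC : 0 ≤ C) (hv : v ≤ C) (hx : 1 ≤ x) :
    v ≤ C * x * 2 ^ (5 * logBeta x) := by
  have hgrowth : 1 ≤ x * 2 ^ (5 * logBeta x) :=
    one_le_mul_of_one_le_of_one_le hx
      (one_le_rpow one_le_two (mul_nonneg (by norm_num) (sqrt_nonneg _)))
  rw [mul_assoc]
  exact hv.trans (le_mul_of_one_le_right hC hgrowth)

theorem stmt_19_general (C₅ C₆ : ℝ) (hC₅ : 0 ≤ C₅) (hC₆ : 0 ≤ C₆) (m₀ : ℕ)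
    (β : ℕ → ℝ)
    (hβ : ∀ m : ℕ, β m =
      (2 : ℝ) ^ Real.sqrt (Real.logb 2 m * Real.logb 2 (Real.logb 2 m)))
    (V : ℕ → ℝ) (hV0 : ∀ m, 0 ≤ V m)
    (hrec : ∀ m : ℕ, m₀ ≤ m →
      V m ≤ C₅ * Real.logb 2 m * β m * m +
        C₆ * Real.logb 2 m * β m * V (Nat.floor ((m : ℝ) / β m))) :
    ∃ (C : ℝ) (M : ℕ), 0 < C ∧ ∀ m : ℕ, M ≤ m →
      V m ≤ C * m *
        (2 : ℝ) ^ (5 * Real.sqrt (Real.logb 2 m * Real.logb 2 (Real.logb 2 m))) := by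
  have hlog : Tendsto (fun m : ℕ => logb 2 m) atTop atTop :=
    (tendsto_logb_atTop one_lt_two).comp tendsto_natCast_atTop_atTop
  obtain ⟨M, hM⟩ := eventually_atTop.1
    ((eventually_ge_atTop m₀).and (hlog.eventually_ge_atTop (max 2 (2 * C₆))))
  set C := 1 + 2 * C₅ + ∑ i ∈ range M, V i
  have hsum : 0 ≤ ∑ i ∈ range M, V i := sum_nonneg fun i _ => hV0 i
  have hbound : ∀ m, 1 ≤ m → V m ≤ C * m * 2 ^ (5 * logBeta m) := by
    intro m
    induction m using Nat.strong_induction_on with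
    | _ m ih =>
      intro hm
      rcases lt_or_ge m M with hmM | hmM
      · refine le_mul_two_rpow_logBeta (by linarith) ?_ (by exact_mod_cast hm)
        linarith [single_le_sum (fun i _ => hV0 i) (mem_range.2 hmM)]
      · obtain ⟨hm₀, hL⟩ := hM m hmM
        have hL₂ : 2 ≤ logb 2 (m : ℝ) := (le_max_left _ _).trans hL
        obtain ⟨hm'₁, hm'm⟩ := one_le_floor_div_and_floor_div_lt hL₂
        have hrecm := hrec m hm₀
        rw [hβ m] at hrecm
        exact le_of_recurrence_step hC₅ hC₆ (by linarith) (by exact_mod_cast hm) (by linarith)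
          ((le_max_right _ _).trans hL) (by exact_mod_cast hm'₁) (Nat.floor_le (by positivity))
          (ih _ hm'm hm'₁) hrecm
  exact ⟨C, M + 1, by positivity, fun m hm => hbound m (by omega)⟩

/-- solving the recurrence
`V(m) ≤ C₅·log(m)·β(m)·m + C₆·log(m)·β(m)·V(m/β(m))` with
`β(m) = 2^{√(log m · log log m)}` (logs base 2, base case bounded) yields
`V(m) ≤ C·m·2^{5√(log m · log log m)}` for all sufficiently large `m`. -/
theorem stmt_19 (C₅ C₆ Bd : ℝ) (hC₅ : 0 ≤ C₅) (hC₆ : 0 ≤ C₆) (m₀ : ℕ)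
    (β : ℕ → ℝ)
    (hβ : ∀ m : ℕ, β m =
      (2 : ℝ) ^ Real.sqrt (Real.logb 2 m * Real.logb 2 (Real.logb 2 m)))
    (V : ℕ → ℝ) (hV0 : ∀ m, 0 ≤ V m) (hbase : ∀ m < m₀, V m ≤ Bd)
    (hrec : ∀ m : ℕ, m₀ ≤ m →
      V m ≤ C₅ * Real.logb 2 m * β m * m +
        C₆ * Real.logb 2 m * β m * V (Nat.floor ((m : ℝ) / β m))) :
    ∃ (C : ℝ) (M : ℕ), 0 < C ∧ ∀ m : ℕ, M ≤ m →
      V m ≤ C * m *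
        (2 : ℝ) ^ (5 * Real.sqrt (Real.logb 2 m * Real.logb 2 (Real.logb 2 m))) :=
  stmt_19_general C₅ C₆ hC₅ hC₆ m₀ β hβ V hV0 hrec
end
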